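/- arXiv:1309.2191 — 9 statements merged into one kernel-verified Lean document; each statement's English description precedes it below -/
import Mathlib

section
/- Let A, B_1, ..., B_h be finite nonempty sets in a commutative group with |A| = m and |A + B_i| ≤ α_i·m for all i. Then |B_1 + ... + B_h| ≤ α_1···α_h·m. -/
set_option maxHeartbeats 1000000

open Pointwise Finset

section Helpers

variable {γ δ : Type*}

lemma my_sum_subset_sum {γ : Type*} [DecidableEq γ] [AddCommMonoid γ]
    {ι : Type*} (s : Finset ι) (f g : ι → Finset γ) (h : ∀ i ∈ s, f i ⊆ g i) :
    ∑ i ∈ s, f i ⊆ ∑ i ∈ s, g i := by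
  classical
  induction s using Finset.induction_on with
  | empty => simp
  | @insert x s' hx ih =>
    rw [Finset.sum_insert hx, Finset.sum_insert hx]
    exact Finset.add_subset_add (h x (Finset.mem_insert_self x s'))
      (ih fun i hi => h i (Finset.mem_insert_of_mem hi))

lemma my_prod_add_prod [DecidableEq γ] [DecidableEq δ] [Add γ] [Add δ]
    (s₁ s₂ : Finset γ) (t₁ t₂ : Finset δ) :
    (s₁ ×ˢ t₁) + (s₂ ×ˢ t₂) = (s₁ + s₂) ×ˢ (t₁ + t₂) := by
  ext ⟨x, y⟩
  simp only [Finset.mem_add, Finset.mem_product, Prod.exists, Prod.mk_add_mk, Prod.mk.injEq]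
  constructor
  · rintro ⟨a₁, a₂, ⟨ha₁, ha₂⟩, b₁, b₂, ⟨hb₁, hb₂⟩, hx, hy⟩
    exact ⟨⟨a₁, ha₁, b₁, hb₁, hx⟩, ⟨a₂, ha₂, b₂, hb₂, hy⟩⟩
  · rintro ⟨⟨a₁, ha₁, b₁, hb₁, hx⟩, ⟨a₂, ha₂, b₂, hb₂, hy⟩⟩
    exact ⟨a₁, a₂, ⟨ha₁, ha₂⟩, b₁, b₂, ⟨hb₁, hb₂⟩, hx, hy⟩

lemma my_sum_product {γ δ : Type*} [DecidableEq γ] [DecidableEq δ]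
    [AddCommMonoid γ] [AddCommMonoid δ] {ι : Type*} (s : Finset ι)
    (f : ι → Finset γ) (g : ι → Finset δ) :
    ∑ i ∈ s, (f i ×ˢ g i) = (∑ i ∈ s, f i) ×ˢ (∑ i ∈ s, g i) := by
  classical
  induction s using Finset.induction_on with
  | empty =>
    simp only [Finset.sum_empty]
    ext ⟨x, y⟩
    simp [Prod.ext_iff, Finset.mem_zero]
  | @insert x s' hx ih =>
    rw [Finset.sum_insert hx, Finset.sum_insert hx, Finset.sum_insert hx, ih,
      my_prod_add_prod]

lemma my_sum_piFinset {κ : Type*} [Fintype κ] [DecidableEq κ]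
    {α : κ → Type*} [∀ j, AddCommMonoid (α j)] [∀ j, DecidableEq (α j)]
    {ι : Type*} (s : Finset ι) (e : ι → ∀ j, Finset (α j)) :
    ∑ i ∈ s, Fintype.piFinset (e i) = Fintype.piFinset (fun j => ∑ i ∈ s, e i j) := by
  classical
  induction s using Finset.induction_on with
  | empty =>
    simp only [Finset.sum_empty]
    ext f
    simp [Fintype.mem_piFinset, Finset.mem_zero, funext_iff]
  | @insert x s' hx ih =>
    rw [Finset.sum_insert hx, ih, ← Fintype.piFinset_add]
    congr 1
    funext j
    rw [Finset.sum_insert hx]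

lemma my_binom (y : ℕ) : ∀ n : ℕ, y ^ (n + 1) + (n + 1) * y ^ n ≤ (y + 1) ^ (n + 1) := by
  intro n
  induction n with
  | zero => simp
  | succ n ih =>
    have e0 : (y + 1) ^ (n + 2) = (y + 1) ^ (n + 1) * (y + 1) := by ring
    rw [e0]
    have e1 : y ^ (n + 1) = y ^ n * y := pow_succ y n
    have e2 : y ^ (n + 2) = y ^ (n + 1) * y := pow_succ y (n + 1)
    have h3 : y ^ (n + 2) + (n + 2) * y ^ (n + 1)
        ≤ (y ^ (n + 1) + (n + 1) * y ^ n) * (y + 1) := by nlinarith [Nat.zero_le (y ^ n)]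
    exact le_trans h3 (Nat.mul_le_mul_right _ ih)

lemma my_pow_limit (x y C : ℕ) (hC : 1 ≤ C)
    (h : ∀ N : ℕ, 0 < N → x ^ N ≤ C * y ^ N) : x ≤ y := by
  by_contra hxy
  push_neg at hxy
  rcases Nat.eq_zero_or_pos y with hy | hy
  · subst hy
    have := h 1 one_pos
    simp at this
    omega
  · set N := C * y + 1 with hN
    have h1 : (y + 1) ^ N ≤ x ^ N := Nat.pow_le_pow_left (by omega) N
    have h2 : y ^ N + N * y ^ (N - 1) ≤ (y + 1) ^ N := by
      have := my_binom y (N - 1)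
      have hN1 : N - 1 + 1 = N := by omega
      rwa [hN1] at this
    have h3 : C * y ^ N < y ^ N + N * y ^ (N - 1) := by
      have hNy : N * y ^ (N - 1) = C * y * y ^ (N - 1) + y ^ (N - 1) := by
        rw [hN]; ring
      have hpow : y * y ^ (N - 1) = y ^ N := by
        have hN1 : N - 1 + 1 = N := by omega
        rw [← pow_succ', hN1]
      have hy1 : 1 ≤ y ^ (N - 1) := Nat.one_le_pow _ _ hy
      calc C * y ^ N < C * y ^ N + y ^ (N - 1) + y ^ N - y ^ N := by omega
        _ ≤ y ^ N + N * y ^ (N - 1) := by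
            rw [hNy, mul_assoc, hpow]; omega
    have := h N (by omega)
    omega

end Helpers

section Lossy

variable {H : Type*} [AddCommGroup H] [DecidableEq H]
variable {ι : Type*} [Fintype ι] [DecidableEq ι] [Nonempty ι]

lemma my_lossy (A : Finset H) (B : ι → Finset H) (hA : A.Nonempty) (hB : ∀ i, (B i).Nonempty) :
    (∑ i, B i).card * A.card ^ (Fintype.card ι - 1)
      ≤ (Fintype.card ι) ^ (Fintype.card ι) * ∏ i, (A + B i).card := by
  classical
  set k := Fintype.card ι with hk
  have hk1 : 1 ≤ k := Fintype.card_pos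
  set a : ι → ℕ := fun i => (A + B i).card with ha
  set P : ℕ := ∏ i, a i with hP
  set L : ι → ℕ := fun i => ∏ j ∈ Finset.univ.erase i, a j with hL
  have haL : ∀ i, a i * L i = P := fun i => Finset.mul_prod_erase Finset.univ a (Finset.mem_univ i)
  have ha_pos : ∀ i, 0 < a i := fun i => (hA.add (hB i)).card_pos
  have hL_pos : ∀ i, 0 < L i := fun i =>
    Finset.prod_pos fun j _ => ha_pos j
  have hP_pos : 0 < P := Finset.prod_pos fun j _ => ha_pos j
  have hm_pos : 0 < A.card := hA.card_pos
  -- the auxiliary sets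
  set E : ι → Finset (ι → ℤ) := fun i =>
    Fintype.piFinset (fun j => if i = j then Finset.Icc (0:ℤ) ((L i : ℤ) - 1) else 0) with hE
  set Bh : ι → Finset (H × (ι → ℤ)) := fun i => (B i) ×ˢ (E i) with hBh
  set Ah : Finset (H × (ι → ℤ)) := A ×ˢ (0 : Finset (ι → ℤ)) with hAh
  set Bt : Finset (H × (ι → ℤ)) := Finset.univ.biUnion Bh with hBt
  have hIccCard : ∀ i, (Finset.Icc (0:ℤ) ((L i : ℤ) - 1)).card = L i := by
    intro i
    rw [Int.card_Icc]
    simp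
  have hEcard : ∀ i, (E i).card = L i := by
    intro i
    rw [hE, Fintype.card_piFinset]
    have : ∀ j, #(if i = j then Finset.Icc (0:ℤ) ((L i : ℤ) - 1) else 0)
        = if i = j then L i else 1 := by
      intro j
      split_ifs
      · exact hIccCard i
      · rfl
    rw [Finset.prod_congr rfl fun j _ => this j, Finset.prod_ite_eq]
    simp
  have hAhcard : Ah.card = A.card := by
    rw [hAh, Finset.card_product]
    simp
  have hAhne : Ah.Nonempty := hA.product ⟨0, by simp [Finset.mem_zero]⟩
  have hABh : ∀ i, Ah + Bh i = (A + B i) ×ˢ E i := by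
    intro i
    rw [hAh, hBh, my_prod_add_prod, zero_add]
  have hABhcard : ∀ i, (Ah + Bh i).card = P := by
    intro i
    rw [hABh i, Finset.card_product, hEcard i]
    exact haL i
  -- card of Ah + Bt
  have hABt_sub : Ah + Bt ⊆ Finset.univ.biUnion (fun i => Ah + Bh i) := by
    intro x hx
    rw [Finset.mem_add] at hx
    obtain ⟨u, hu, v, hv, rfl⟩ := hx
    rw [hBt, Finset.mem_biUnion] at hv
    obtain ⟨i, _, hv⟩ := hv
    exact Finset.mem_biUnion.2 ⟨i, Finset.mem_univ i,
      Finset.mem_add.2 ⟨u, hu, v, hv, rfl⟩⟩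
  have hABt_card : (Ah + Bt).card ≤ k * P := by
    calc (Ah + Bt).card ≤ ∑ i, (Ah + Bh i).card :=
          le_trans (Finset.card_le_card hABt_sub) Finset.card_biUnion_le
      _ = k * P := by
          rw [Finset.sum_congr rfl fun i _ => hABhcard i]
          simp [hk, mul_comm]
  -- the sum of the Bh
  have hEsum : ∑ i, E i = Fintype.piFinset (fun j => Finset.Icc (0:ℤ) ((L j : ℤ) - 1)) := by
    rw [hE, my_sum_piFinset]
    congr 1
    funext j
    rw [Finset.sum_ite_eq' Finset.univ j (fun i => Finset.Icc (0:ℤ) ((L i : ℤ) - 1))]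
    simp
  have hBhsum : ∑ i, Bh i = (∑ i, B i) ×ˢ (Fintype.piFinset
      (fun j => Finset.Icc (0:ℤ) ((L j : ℤ) - 1))) := by
    rw [hBh, my_sum_product, hEsum]
  have hBhsum_card : (∑ i, Bh i).card = (∑ i, B i).card * ∏ j, L j := by
    rw [hBhsum, Finset.card_product, Fintype.card_piFinset]
    congr 1
    exact Finset.prod_congr rfl fun j _ => hIccCard j
  -- subset of k • Bt
  have hsub : ∑ i, Bh i ⊆ k • Bt := by
    have h1 : ∑ i, Bh i ⊆ ∑ _i : ι, Bt :=
      my_sum_subset_sum Finset.univ Bh (fun _ => Bt)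
        (fun i _ => Finset.subset_biUnion_of_mem Bh (Finset.mem_univ i))
    rwa [Finset.sum_const, Finset.card_univ, ← hk] at h1
  -- Plünnecke-Ruzsa
  have hPR := Finset.pluennecke_ruzsa_inequality_nsmul_add hAhne Bt k
  -- abstract all cardinalities into plain naturals
  obtain ⟨T, hT⟩ : ∃ t, (k • Bt).card = t := ⟨_, rfl⟩
  obtain ⟨U, hU⟩ : ∃ u, (Ah + Bt).card = u := ⟨_, rfl⟩
  have hV : (∑ i, Bh i).card = (∑ i, B i).card * ∏ j, L j := hBhsum_card
  have hf2 : (∑ i, B i).card * ∏ j, L j ≤ T := by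
    rw [← hT, ← hV]; exact Finset.card_le_card hsub
  have hf3 : ((T : ℚ≥0)) ≤ ((U : ℚ≥0) / (A.card : ℚ≥0)) ^ k * (A.card : ℚ≥0) := by
    rw [← hT, ← hU, ← hAhcard]; exact hPR
  have hf4 : U ≤ k * P := by rw [← hU]; exact hABt_card
  have hmne : ((A.card : ℚ≥0)) ≠ 0 := by
    exact_mod_cast hm_pos.ne'
  -- the NNRat chain
  have hchain : ((∑ i, B i).card * (∏ j, L j) * A.card ^ (k-1) : ℚ≥0) ≤ (k * P) ^ k := by
    have h1 : ((∑ i, B i).card * (∏ j, L j) : ℚ≥0) ≤ (T : ℚ≥0) := by exact_mod_cast hf2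
    have h3 : ((U : ℚ≥0) / (A.card : ℚ≥0)) ^ k * (A.card : ℚ≥0)
        ≤ (((k * P : ℕ) : ℚ≥0) / (A.card : ℚ≥0)) ^ k * (A.card : ℚ≥0) := by
      gcongr
    have h4 : ((∑ i, B i).card * (∏ j, L j) : ℚ≥0) * (A.card : ℚ≥0) ^ (k - 1)
        ≤ (((k * P : ℕ) : ℚ≥0)) ^ k := by
      have h5 : ((∑ i, B i).card * (∏ j, L j) : ℚ≥0)
          ≤ (((k * P : ℕ) : ℚ≥0) / (A.card : ℚ≥0)) ^ k * (A.card : ℚ≥0) :=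
        le_trans h1 (le_trans hf3 h3)
      have h6 : (((k * P : ℕ) : ℚ≥0) / (A.card : ℚ≥0)) ^ k * (A.card : ℚ≥0)
          * (A.card : ℚ≥0) ^ (k - 1) = (((k * P : ℕ) : ℚ≥0)) ^ k := by
        have hkk : k - 1 + 1 = k := by omega
        rw [div_pow, div_mul_eq_mul_div, div_mul_eq_mul_div, mul_assoc, ← pow_succ', hkk,
          mul_div_assoc, div_self (by positivity), mul_one]
      calc ((∑ i, B i).card * (∏ j, L j) : ℚ≥0) * (A.card : ℚ≥0) ^ (k - 1)
          ≤ ((((k * P : ℕ) : ℚ≥0) / (A.card : ℚ≥0)) ^ k * (A.card : ℚ≥0))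
            * (A.card : ℚ≥0) ^ (k - 1) := by
            exact mul_le_mul_left h5 _
        _ = (((k * P : ℕ) : ℚ≥0)) ^ k := h6
    calc ((∑ i, B i).card * (∏ j, L j) * A.card ^ (k-1) : ℚ≥0)
        = ((∑ i, B i).card * (∏ j, L j) : ℚ≥0) * (A.card : ℚ≥0) ^ (k - 1) := by push_cast; ring
      _ ≤ (((k * P : ℕ) : ℚ≥0)) ^ k := h4
      _ = (k * P : ℚ≥0) ^ k := by push_cast; ring
  -- back to ℕ
  have hchainN : (∑ i, B i).card * (∏ j, L j) * A.card ^ (k-1) ≤ (k * P) ^ k := by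
    exact_mod_cast hchain
  -- now cancel ∏ L j using P * ∏ L = P ^ k
  have hPL : P * ∏ j, L j = P ^ k := by
    calc P * ∏ j, L j = ∏ j, (a j * L j) := by
          rw [Finset.prod_mul_distrib, ← hP]
      _ = ∏ _j : ι, P := Finset.prod_congr rfl fun j _ => haL j
      _ = P ^ k := by rw [Finset.prod_const, Finset.card_univ, ← hk]
  have hPLpos : 0 < ∏ j, L j := Finset.prod_pos fun j _ => hL_pos j
  have key : ((∑ i, B i).card * A.card ^ (k-1)) * (P * ∏ j, L j) ≤ (k ^ k * P) * (P * ∏ j, L j) := by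
    calc ((∑ i, B i).card * A.card ^ (k-1)) * (P * ∏ j, L j)
        = ((∑ i, B i).card * (∏ j, L j) * A.card ^ (k-1)) * P := by ring
      _ ≤ (k * P) ^ k * P := Nat.mul_le_mul_right _ hchainN
      _ = k ^ k * P ^ k * P := by rw [mul_pow]
      _ = (k ^ k * P) * (P * ∏ j, L j) := by rw [← hPL]; ring
  exact Nat.le_of_mul_le_mul_right key (Nat.mul_pos hP_pos hPLpos)

end Lossy

theorem sumset_B_card_le {G : Type*} [AddCommGroup G] [DecidableEq G]
    (h m : ℕ) (hh : 0 < h) (hm : 0 < m) (α : Fin h → ℝ) (hα : ∀ i, 0 < α i)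
    (A : Finset G) (B : Fin h → Finset G) (hA : A.Nonempty) (hB : ∀ i, (B i).Nonempty)
    (hAm : A.card = m) (hAB : ∀ i, ((A + B i).card : ℝ) ≤ α i * m) :
    ((∑ i, B i).card : ℝ) ≤ (∏ i, α i) * m := by
  classical
  have : Nonempty (Fin h) := ⟨⟨0, hh⟩⟩
  -- exact integer inequality by tensor power trick
  have key : ∀ N : ℕ, 0 < N →
      ((∑ i, B i).card * A.card ^ (h - 1)) ^ N ≤ h ^ h * (∏ i, (A + B i).card) ^ N := by
    intro N hN
    have := my_lossy (H := Fin N → G) (ι := Fin h)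
      (Fintype.piFinset fun _ => A) (fun i => Fintype.piFinset fun _ => B i)
      (Fintype.piFinset_nonempty.2 fun _ => hA)
      (fun i => Fintype.piFinset_nonempty.2 fun _ => hB i)
    rw [Fintype.card_fin] at this
    have hsum : (∑ i, Fintype.piFinset fun _ : Fin N => B i)
        = Fintype.piFinset (fun _ : Fin N => ∑ i, B i) := by
      rw [my_sum_piFinset]
    have hcard1 : (∑ i, Fintype.piFinset fun _ : Fin N => B i).card = (∑ i, B i).card ^ N := by
      rw [hsum, Fintype.card_piFinset]
      simp
    have hcard2 : (Fintype.piFinset fun _ : Fin N => A).card = A.card ^ N := by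
      rw [Fintype.card_piFinset]; simp
    have hcard3 : ∀ i, ((Fintype.piFinset fun _ : Fin N => A)
        + (Fintype.piFinset fun _ : Fin N => B i)).card = (A + B i).card ^ N := by
      intro i
      rw [← Fintype.piFinset_add, Fintype.card_piFinset]
      simp
    rw [hcard1, hcard2] at this
    calc ((∑ i, B i).card * A.card ^ (h - 1)) ^ N
        = (∑ i, B i).card ^ N * (A.card ^ N) ^ (h - 1) := by
          rw [mul_pow, ← pow_mul, ← pow_mul, Nat.mul_comm N (h - 1)]
      _ ≤ h ^ h * ∏ i, ((Fintype.piFinset fun _ : Fin N => A)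
            + (Fintype.piFinset fun _ : Fin N => B i)).card := this
      _ = h ^ h * (∏ i, (A + B i).card) ^ N := by
          rw [Finset.prod_congr rfl fun i _ => hcard3 i, Finset.prod_pow]
  have hNat : (∑ i, B i).card * A.card ^ (h - 1) ≤ ∏ i, (A + B i).card :=
    my_pow_limit _ _ _ (Nat.one_le_pow _ _ hh) key
  -- cast to ℝ
  have hR : ((∑ i, B i).card : ℝ) * (m : ℝ) ^ (h - 1) ≤ ∏ i, ((A + B i).card : ℝ) := by
    rw [← hAm]
    exact_mod_cast hNat
  have hR2 : ∏ i, ((A + B i).card : ℝ) ≤ (∏ i, α i) * (m : ℝ) ^ h := by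
    calc ∏ i, ((A + B i).card : ℝ) ≤ ∏ i, (α i * m) := by
          apply Finset.prod_le_prod
          · intro i _; positivity
          · intro i _; exact hAB i
      _ = (∏ i, α i) * (m : ℝ) ^ h := by
          rw [Finset.prod_mul_distrib, Finset.prod_const]
          simp
  have hmpow : (0:ℝ) < (m : ℝ) ^ (h - 1) := by positivity
  have hmh : (m : ℝ) ^ h = (m : ℝ) ^ (h - 1) * m := by
    rw [← pow_succ]
    congr 1
    omega
  have : ((∑ i, B i).card : ℝ) * (m : ℝ) ^ (h - 1) ≤ ((∏ i, α i) * m) * (m : ℝ) ^ (h - 1) := by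
    calc ((∑ i, B i).card : ℝ) * (m : ℝ) ^ (h - 1) ≤ ∏ i, ((A + B i).card : ℝ) := hR
      _ ≤ (∏ i, α i) * (m : ℝ) ^ h := hR2
      _ = ((∏ i, α i) * m) * (m : ℝ) ^ (h - 1) := by rw [hmh]; ring
  exact le_of_mul_le_mul_right this hmpow
end

section
/- Let A, B_1, ..., B_h be finite sets in a commutative group, E ⊆ A with A \ E nonempty, and for nonempty Z ⊆ A \ E define μ(Z) = (1/h)·Σ_{i=1}^h |(Z + B_i) \ (E + B_i)|/|Z|. If X minimizes μ over nonempty subsets of A \ E (and is minimal among minimizers), and X' minimizes the analogous quantity μ'(Z) = (1/h)·Σ_{i=1}^h |(Z + B_i) \ ((E ∪ X) + B_i)|/|Z| over nonempty Z ⊆ A \ (E ∪ X), then μ(X) ≤ μ'(X'). -/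
/-!
Write `F_E(Z) = (1/h) Σᵢ |(Z + Bᵢ) \ (E + Bᵢ)|`, so that `μ(Z) = F_E(Z) / |Z|`. Since `X'` is
disjoint from `X`, every element of `(X ∪ X') + Bᵢ` outside `E + Bᵢ` is either in `X + Bᵢ`, or in
`X' + Bᵢ` but outside `(E ∪ X) + Bᵢ`; hence `F_E(X ∪ X') ≤ F_E(X) + F_{E ∪ X}(X')`. Minimality of
`X` gives `F_E(X)/|X| ≤ F_E(X ∪ X')/(|X| + |X'|) ≤ (F_E(X) + F_{E ∪ X}(X'))/(|X| + |X'|)`, and a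
fraction bounded by its mediant with `F_{E ∪ X}(X')/|X'|` is bounded by that fraction itself.
-/

open Pointwise Finset

theorem div_le_div_of_div_le_mediant {a b c d : ℝ} (hb : 0 < b) (hd : 0 < d)
    (h : a / b ≤ (a + c) / (b + d)) : a / b ≤ c / d := by
  rw [div_le_div_iff₀ hb (by positivity)] at h
  rw [div_le_div_iff₀ hb hd]
  linarith

section Boundary

variable {G ι : Type*} [Add G] [DecidableEq G]

theorem card_union_add_sdiff_le (B E X Y : Finset G) :
    #((X ∪ Y + B) \ (E + B)) ≤ #((X + B) \ (E + B)) + #((Y + B) \ (E ∪ X + B)) := by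
  refine (card_le_card fun z hz => ?_).trans (card_union_le _ _)
  simp only [union_add, mem_sdiff, mem_union] at hz ⊢
  tauto

variable [Fintype ι]

/-- With `w = 1/h` this is `F_E(Z)`, so `μ(Z) = weightedBoundary (1/h) B E Z / |Z|`. -/
noncomputable def weightedBoundary (w : ℝ) (B : ι → Finset G) (E Z : Finset G) : ℝ :=
  w * ∑ i, (#((Z + B i) \ (E + B i)) : ℝ)

theorem mul_sum_card_sdiff_div_eq (w : ℝ) (B : ι → Finset G) (E Z : Finset G) :
    w * ∑ i, (#((Z + B i) \ (E + B i)) : ℝ) / #Z = weightedBoundary w B E Z / #Z := by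
  rw [weightedBoundary, mul_div_assoc, sum_div]

theorem weightedBoundary_union_le {w : ℝ} (hw : 0 ≤ w) (B : ι → Finset G) (E X Y : Finset G) :
    weightedBoundary w B E (X ∪ Y) ≤
      weightedBoundary w B E X + weightedBoundary w B (E ∪ X) Y := by
  rw [weightedBoundary, weightedBoundary, weightedBoundary, ← mul_add, ← sum_add_distrib]
  gcongr with i
  exact_mod_cast card_union_add_sdiff_le (B i) E X Y

end Boundary

theorem mu_monotone_successive_general {G : Type*} [AddCommGroup G] [DecidableEq G]
    (h : ℕ) (A : Finset G) (B : Fin h → Finset G)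
    (E : Finset G)
    (X : Finset G) (hX : X ⊆ A \ E) (hXne : X.Nonempty)
    (hmin : ∀ Z : Finset G, Z ⊆ A \ E → Z.Nonempty →
      (1 / h : ℝ) * ∑ i, (((X + B i) \ (E + B i)).card : ℝ) / X.card ≤
      (1 / h : ℝ) * ∑ i, (((Z + B i) \ (E + B i)).card : ℝ) / Z.card)
    (X' : Finset G) (hX' : X' ⊆ A \ (E ∪ X)) (hX'ne : X'.Nonempty) :
    (1 / h : ℝ) * ∑ i, (((X + B i) \ (E + B i)).card : ℝ) / X.card ≤
    (1 / h : ℝ) * ∑ i, (((X' + B i) \ ((E ∪ X) + B i)).card : ℝ) / X'.card := by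
  have hdisj : Disjoint X X' :=
    disjoint_left.2 fun _ hx hx' => (mem_sdiff.1 (hX' hx')).2 (mem_union_right E hx)
  have hunion : X ∪ X' ⊆ A \ E :=
    union_subset hX (hX'.trans (sdiff_subset_sdiff le_rfl subset_union_left))
  have hratio := hmin (X ∪ X') hunion (hXne.mono subset_union_left)
  simp only [mul_sum_card_sdiff_div_eq] at hratio ⊢
  rw [card_union_of_disjoint hdisj, Nat.cast_add] at hratio
  refine div_le_div_of_div_le_mediant (by exact_mod_cast hXne.card_pos)
    (by exact_mod_cast hX'ne.card_pos) (hratio.trans ?_)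
  gcongr
  exact weightedBoundary_union_le (by positivity) B E X X'

theorem mu_monotone_successive {G : Type*} [AddCommGroup G] [DecidableEq G]
    (h : ℕ) (hh : 0 < h) (A : Finset G) (B : Fin h → Finset G)
    (E : Finset G) (hE : E ⊆ A) (hAE : (A \ E).Nonempty)
    (X : Finset G) (hX : X ⊆ A \ E) (hXne : X.Nonempty)
    (hmin : ∀ Z : Finset G, Z ⊆ A \ E → Z.Nonempty →
      (1 / h : ℝ) * ∑ i, (((X + B i) \ (E + B i)).card : ℝ) / X.card ≤
      (1 / h : ℝ) * ∑ i, (((Z + B i) \ (E + B i)).card : ℝ) / Z.card)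
    (hminimal : ∀ Z : Finset G, Z ⊆ A \ E → Z.Nonempty →
      (1 / h : ℝ) * ∑ i, (((Z + B i) \ (E + B i)).card : ℝ) / Z.card =
      (1 / h : ℝ) * ∑ i, (((X + B i) \ (E + B i)).card : ℝ) / X.card →
      X.card ≤ Z.card)
    (X' : Finset G) (hX' : X' ⊆ A \ (E ∪ X)) (hX'ne : X'.Nonempty)
    (hmin' : ∀ Z : Finset G, Z ⊆ A \ (E ∪ X) → Z.Nonempty →
      (1 / h : ℝ) * ∑ i, (((X' + B i) \ ((E ∪ X) + B i)).card : ℝ) / X'.card ≤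
      (1 / h : ℝ) * ∑ i, (((Z + B i) \ ((E ∪ X) + B i)).card : ℝ) / Z.card) :
    (1 / h : ℝ) * ∑ i, (((X + B i) \ (E + B i)).card : ℝ) / X.card ≤
    (1 / h : ℝ) * ∑ i, (((X' + B i) \ ((E ∪ X) + B i)).card : ℝ) / X'.card :=
  mu_monotone_successive_general h A B E X hX hXne hmin X' hX' hX'ne
end

section
/- For every positive integer h there exist, for infinitely many m, finite sets A, B_1, ..., B_h in a commutative group with |A| = m, |A + B_i| ≤ (1 + o(1))·α_i·m, and |A + B_1 + ... + B_h| ≥ (1 + o(1))·((1 - 1/h)^(h-1)/h)·α_1···α_h·m^(2 - 1/h). -/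
/-!
In `G = (ℤ/n)^h × ℤ/(d+1)` take `A = ((ℤ/n)^h × {0}) ∪ ({0} × (ℤ/(d+1) ∖ {0}))` and let `Bᵢ` be
the `i`-th coordinate axis of `(ℤ/n)^h`. Then `|A| = n^h + d` and `|A + Bᵢ| = n^h + n d`, while
`A + B₁ + ⋯ + B_h` is all of `G`, of size `n^h (d + 1)`. For `h = k + 1 ≥ 2` choose `d = ⌊n^k / k⌋`
and `αᵢ = (k + 1) / k`: then `|A + Bᵢ| ≤ αᵢ |A|`, and since `n^h ≤ |A| ≤ n^k (n + 1)`,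
`|A|^(2 - 1/h) ≤ |A|² / n` is within a factor `(1 + 1/n)²` of `k · n^h (d + 1)`; the constant
matches because `(1 - 1/h)^(h-1) / h · αᵢ^h = 1 / k`. For `h = 1` take `d = 0` and `α₁ = 1`.
-/

open Pointwise Finset

section CrossSet

variable {V W : Type*} [DecidableEq V] [DecidableEq W] [Fintype V] [Fintype W]

variable (V W) in
def crossSet [Zero V] [Zero W] : Finset (V × W) := univ ×ˢ {0} ∪ {0} ×ˢ {0}ᶜ

theorem card_crossSet [Zero V] [Zero W] :
    #(crossSet V W) = Fintype.card V + (Fintype.card W - 1) := by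
  rw [crossSet, card_union_of_disjoint (disjoint_product.2 (.inr disjoint_compl_right))]
  simp [card_compl]

theorem crossSet_add_product_zero [AddMonoid V] [AddMonoid W] {S : Finset V} (hS : 0 ∈ S) :
    crossSet V W + S ×ˢ {0} = univ ×ˢ {0} ∪ S ×ˢ {0}ᶜ := by
  rw [crossSet, union_add, product_add_product_comm, product_add_product_comm,
    univ_add_of_zero_mem hS]
  simp only [singleton_zero, zero_add, add_zero]

theorem card_crossSet_add_product_zero [AddMonoid V] [AddMonoid W] {S : Finset V} (hS : 0 ∈ S) :
    #(crossSet V W + S ×ˢ {0}) = Fintype.card V + #S * (Fintype.card W - 1) := by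
  rw [crossSet_add_product_zero hS,
    card_union_of_disjoint (disjoint_product.2 (.inr disjoint_compl_right))]
  simp [card_compl]

end CrossSet

theorem sum_product_zero {ι V W : Type*} [AddCommMonoid V] [AddCommMonoid W] [DecidableEq V]
    [DecidableEq W] (s : Finset ι) (f : ι → Finset V) :
    ∑ i ∈ s, f i ×ˢ ({0} : Finset W) = (∑ i ∈ s, f i) ×ˢ {0} := by
  classical
  induction s using Finset.induction with
  | empty => rfl
  | insert a s ha ih =>
    rw [sum_insert ha, sum_insert ha, ih, product_add_product_comm, singleton_zero, zero_add]

theorem sum_image_single_univ {ι M : Type*} [Fintype ι] [DecidableEq ι] [AddCommMonoid M]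
    [Fintype M] [DecidableEq M] :
    ∑ i, univ.image (fun c : M => (Pi.single i c : ι → M)) = univ := by
  refine eq_univ_of_forall fun v => ?_
  rw [← mem_coe, coe_sum, ← Finset.univ_sum_single v]
  exact Set.finsetSum_mem_finsetSum _ _ _ fun i _ => mem_image_of_mem _ (mem_univ _)

theorem exists_sumsets_card_eq (h n d : ℕ) [NeZero n] :
    ∃ (G : Type) (_ : AddCommGroup G) (_ : DecidableEq G) (A : Finset G) (B : Fin h → Finset G),
      #A = n ^ h + d ∧ (∀ i, #(A + B i) = n ^ h + n * d) ∧ #(A + ∑ i, B i) = n ^ h * (d + 1) := by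
  let L : Fin h → Finset (Fin h → ZMod n) := fun i => univ.image fun c => Pi.single i c
  refine ⟨(Fin h → ZMod n) × ZMod (d + 1), inferInstance, inferInstance, crossSet _ _,
    fun i => L i ×ˢ {0}, by simp [card_crossSet], fun i => ?_, ?_⟩
  · rw [card_crossSet_add_product_zero (mem_image.2 ⟨0, mem_univ _, Pi.single_zero i⟩),
      card_image_of_injective _ (Pi.single_injective i)]
    simp
  · rw [sum_product_zero, sum_image_single_univ, card_crossSet_add_product_zero (mem_univ _)]
    simp only [Fintype.card_pi, ZMod.card, prod_const, card_univ, Fintype.card_fin,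
      add_tsub_cancel_right]
    ring

theorem rpow_two_sub_inv_le {m n : ℝ} {h : ℕ} (hh : h ≠ 0) (hn : 0 < n) (hm : n ^ h ≤ m) :
    m ^ (2 - 1 / (h : ℝ)) ≤ m ^ 2 / n := by
  have hm0 : 0 < m := (pow_pos hn h).trans_le hm
  have hroot : n ≤ m ^ (1 / (h : ℝ)) :=
    calc n = (n ^ h) ^ (1 / (h : ℝ)) := by rw [one_div, Real.pow_rpow_inv_natCast hn.le hh]
      _ ≤ m ^ (1 / (h : ℝ)) := by gcongr
  rw [Real.rpow_sub hm0, Real.rpow_two]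
  exact div_le_div_of_nonneg_left (by positivity) hn hroot

theorem one_sub_inv_pow_div_mul_pow (k : ℕ) (hk : k ≠ 0) :
    (1 - 1 / (k + 1 : ℝ)) ^ k / (k + 1) * ((k + 1) / k) ^ (k + 1) = 1 / k := by
  have hk' : (k : ℝ) ≠ 0 := by exact_mod_cast hk
  rw [show (1 : ℝ) - 1 / (k + 1) = ((k + 1 : ℝ) / k)⁻¹ by field_simp; ring, inv_pow, pow_succ]
  field_simp

theorem pow_succ_add_mul_le {k : ℕ} (hk : k ≠ 0) {n d ε : ℝ} (hn : 0 ≤ n) (hd : 0 ≤ d)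
    (hε : 0 ≤ ε) (hkd : k * d ≤ n ^ k) :
    n ^ (k + 1) + n * d ≤ (1 + ε) * ((k + 1) / k) * (n ^ (k + 1) + d) := by
  have hk' : (0 : ℝ) < k := by exact_mod_cast Nat.pos_of_ne_zero hk
  have hnd : k * (n * d) ≤ n ^ (k + 1) := by
    rw [pow_succ']; nlinarith [mul_le_mul_of_nonneg_left hkd hn]
  calc n ^ (k + 1) + n * d ≤ (k + 1) / k * (n ^ (k + 1) + d) := by
        rw [div_mul_eq_mul_div, le_div_iff₀ hk']
        nlinarith
    _ ≤ (1 + ε) * ((k + 1) / k) * (n ^ (k + 1) + d) := by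
      rw [mul_assoc]; exact le_mul_of_one_le_left (by positivity) (by linarith)

theorem one_sub_mul_rpow_le_pow_succ_mul_add_one {k : ℕ} (hk : k ≠ 0) {n d ε : ℝ} (hd : 0 ≤ d)
    (hkd : k * d ≤ n ^ k) (hdk : n ^ k ≤ k * (d + 1)) (hε : 0 < ε) (hεn : 2 ≤ ε * n) :
    (1 - ε) * ((1 - 1 / (k + 1 : ℝ)) ^ k / (k + 1)) * ((k + 1) / k) ^ (k + 1) *
      (n ^ (k + 1) + d) ^ (2 - 1 / (k + 1 : ℝ)) ≤ n ^ (k + 1) * (d + 1) := by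
  have hn : 0 < n := pos_of_mul_pos_right (by linarith) hε.le
  have hk' : (0 : ℝ) < k := by exact_mod_cast Nat.pos_of_ne_zero hk
  set m := n ^ (k + 1) + d
  have hm : 0 ≤ m := by positivity
  have hm_le : m ≤ n ^ k * (n + 1) := by
    have : d ≤ n ^ k :=
      (le_mul_of_one_le_left hd (by exact_mod_cast Nat.one_le_iff_ne_zero.2 hk)).trans hkd
    simp only [m, pow_succ]; linarith
  have hrpow : m ^ (2 - 1 / (k + 1 : ℝ)) ≤ m ^ 2 / n := by
    simpa using rpow_two_sub_inv_le (m := m) k.succ_ne_zero hn (by simp [m, hd])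
  rw [mul_assoc (1 - ε), one_sub_inv_pow_div_mul_pow k hk]
  rcases le_or_gt ε 1 with hε1 | hε1
  · have hkey : (1 - ε) * (n + 1) ^ 2 ≤ n ^ 2 := by nlinarith
    have hε1' : 0 ≤ 1 - ε := by linarith
    calc (1 - ε) * (1 / k) * m ^ (2 - 1 / (k + 1 : ℝ))
        ≤ (1 - ε) * (1 / k) * ((n ^ k * (n + 1)) ^ 2 / n) := by
          gcongr; exact hrpow.trans (by gcongr)
      _ = (n ^ k) ^ 2 * n⁻¹ * ((1 - ε) * (n + 1) ^ 2) / k := by ring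
      _ ≤ (n ^ k) ^ 2 * n⁻¹ * n ^ 2 / k := by gcongr
      _ = n ^ (k + 1) * n ^ k / k := by field_simp; ring
      _ ≤ n ^ (k + 1) * (d + 1) := by rw [div_le_iff₀ hk']; nlinarith [pow_pos hn (k + 1)]
  · have : (1 - ε) * (1 / k) * m ^ (2 - 1 / (k + 1 : ℝ)) ≤ 0 :=
      mul_nonpos_of_nonpos_of_nonneg
        (mul_nonpos_of_nonpos_of_nonneg (by linarith) (by positivity)) (by positivity)
    exact this.trans (by positivity)

theorem extremal_examples_exist (h : ℕ) (hh : 0 < h) :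
    ∃ α : Fin h → ℚ, (∀ i, 0 < α i) ∧
      ∀ ε : ℝ, 0 < ε → ∀ m₀ : ℕ, ∃ m : ℕ, m₀ ≤ m ∧
        ∃ (G : Type) (_ : AddCommGroup G) (_ : DecidableEq G)
          (A : Finset G) (B : Fin h → Finset G),
          A.card = m ∧
          (∀ i, ((A + B i).card : ℝ) ≤ (1 + ε) * (α i : ℝ) * m) ∧
          (1 - ε) * ((1 - 1 / (h : ℝ)) ^ (h - 1) / h) * (∏ i, (α i : ℝ)) *
              (m : ℝ) ^ ((2 : ℝ) - 1 / h) ≤ ((A + ∑ i, B i).card : ℝ) := by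
  obtain rfl | ⟨k, hk, rfl⟩ : h = 1 ∨ ∃ k ≠ 0, h = k + 1 :=
    (eq_or_ne h 1).imp id fun h1 => ⟨h - 1, by omega, by omega⟩
  · refine ⟨fun _ => 1, fun _ => one_pos, fun ε hε m₀ => ?_⟩
    obtain ⟨G, _, _, A, B, hA, hAB, hAsum⟩ := exists_sumsets_card_eq 1 (m₀ + 1) 0
    refine ⟨(m₀ + 1) ^ 1 + 0, by simp, G, ‹_›, ‹_›, A, B, hA, fun i => ?_, ?_⟩
    · rw [hAB]; push_cast; nlinarith
    · rw [hAsum]; norm_num; nlinarith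
  · refine ⟨fun _ => (k + 1 : ℚ) / k, fun _ => by positivity, fun ε hε m₀ => ?_⟩
    set n := max m₀ ⌈2 / ε⌉₊ + 1
    set d := n ^ k / k
    obtain ⟨G, _, _, A, B, hA, hAB, hAsum⟩ := exists_sumsets_card_eq (k + 1) n d
    have hkd : k * d ≤ n ^ k := mul_comm k d ▸ Nat.div_mul_le_self _ _
    have hdk : n ^ k ≤ k * (d + 1) := (Nat.lt_mul_div_succ _ (Nat.pos_of_ne_zero hk)).le
    have hm₀n : m₀ ≤ n := (le_max_left _ _).trans (Nat.le_succ _)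
    have hεn : 2 ≤ ε * n := by
      have : 2 / ε ≤ n := (Nat.le_ceil _).trans <| by
        exact_mod_cast (le_max_right m₀ _).trans (Nat.le_succ _)
      rwa [div_le_iff₀' hε] at this
    refine ⟨n ^ (k + 1) + d, ?_, G, ‹_›, ‹_›, A, B, hA, fun i => ?_, ?_⟩
    · exact hm₀n.trans <| (Nat.le_self_pow k.succ_ne_zero n).trans (Nat.le_add_right _ _)
    · rw [hAB]; push_cast
      exact pow_succ_add_mul_le hk (by positivity) (by positivity) hε.le (by exact_mod_cast hkd)
    · rw [hAsum, prod_const, card_univ, Fintype.card_fin]; push_cast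
      exact one_sub_mul_rpow_le_pow_succ_mul_add_one hk (by positivity) (by exact_mod_cast hkd)
        (by exact_mod_cast hdk) hε hεn
end

section
/- The addition graph G_+(A, B_1, ..., B_h) of finite sets A, B_1, ..., B_h in a commutative group is square commutative. -/
open Pointwise Finset

/-- A hypercube graph indexed by the subsets of `{1, …, h}` (modelled as `Finset (Fin h)`):
a directed graph whose vertices carry an index set, with edges only adding one index. -/
structure HypercubeGraph (h : ℕ) (V : Type*) where
  verts : Finset V
  idx : V → Finset (Fin h)
  Edge : V → V → Prop
  edge_mem_left : ∀ u v, Edge u v → u ∈ verts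
  edge_mem_right : ∀ u v, Edge u v → v ∈ verts
  edge_step : ∀ u v, Edge u v → ∃ i ∉ idx u, idx v = insert i (idx u)

namespace HypercubeGraph

variable {h : ℕ} {V V₁ V₂ : Type*}

/-- `I → I'` in `Q_h`: `I'` is obtained from `I` by adding one index. -/
def Step (I I' : Finset (Fin h)) : Prop := ∃ i ∉ I, I' = insert i I

/-- Square commutativity: directed squares can be completed through the associate
index class `I ∪ (I'' \ I')`, with distinct intermediate vertices. -/
def SquareComm (G : HypercubeGraph h V) : Prop :=
  (∀ I I' I'' : Finset (Fin h), Step I I' → Step I' I'' →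
    ∀ v v', G.idx v = I → G.idx v' = I' → G.Edge v v' →
    ∀ S : Finset V, (∀ w ∈ S, G.idx w = I'' ∧ G.Edge v' w) →
    ∃ f : V → V, Set.InjOn f ↑S ∧
      ∀ w ∈ S, G.idx (f w) = I ∪ (I'' \ I') ∧ G.Edge v (f w) ∧ G.Edge (f w) w) ∧
  (∀ I I' I'' : Finset (Fin h), Step I I' → Step I' I'' →
    ∀ v' v'', G.idx v' = I' → G.idx v'' = I'' → G.Edge v' v'' →
    ∀ S : Finset V, (∀ w ∈ S, G.idx w = I ∧ G.Edge w v') →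
    ∃ f : V → V, Set.InjOn f ↑S ∧
      ∀ w ∈ S, G.idx (f w) = I ∪ (I'' \ I') ∧ G.Edge w (f w) ∧ G.Edge (f w) v'')

open Classical in
/-- The image of `Z` in the vertex class `U_I`: vertices of index `I` reachable from `Z`. -/
noncomputable def ImU (G : HypercubeGraph h V) (Z : Finset V) (I : Finset (Fin h)) : Finset V :=
  G.verts.filter fun v => G.idx v = I ∧ ∃ z ∈ Z, Relation.ReflTransGen G.Edge z v

open Classical in
/-- The image of `Z` in the `i`-th layer `V_i = ⊎_{|I| = i} U_I`. -/
noncomputable def ImL (G : HypercubeGraph h V) (Z : Finset V) (i : ℕ) : Finset V :=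
  G.verts.filter fun v => (G.idx v).card = i ∧ ∃ z ∈ Z, Relation.ReflTransGen G.Edge z v

open Classical in
/-- The bottom layer `V_0 = U_∅`. -/
noncomputable def bottom (G : HypercubeGraph h V) : Finset V :=
  G.verts.filter fun v => G.idx v = ∅

/-- The `i`-th magnification ratio `μ_i(G)`. -/
noncomputable def mu (G : HypercubeGraph h V) (i : ℕ) : ℝ :=
  sInf { r : ℝ | ∃ Z : Finset V, Z.Nonempty ∧ Z ⊆ G.bottom ∧
    r = ((G.ImL Z i).card : ℝ) / (Z.card : ℝ) }

/-- The hypercube product of two `Q_h`-hypercube graphs. -/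
def prod (G₁ : HypercubeGraph h V₁) (G₂ : HypercubeGraph h V₂) :
    HypercubeGraph h (V₁ × V₂) where
  verts := (G₁.verts ×ˢ G₂.verts).filter fun p => G₁.idx p.1 = G₂.idx p.2
  idx p := G₁.idx p.1
  Edge p q := G₁.idx p.1 = G₂.idx p.2 ∧ G₁.idx q.1 = G₂.idx q.2 ∧
    G₁.Edge p.1 q.1 ∧ G₂.Edge p.2 q.2
  edge_mem_left := by
    rintro p q ⟨h1, h2, h3, h4⟩
    simp only [Finset.mem_filter, Finset.mem_product]
    exact ⟨⟨G₁.edge_mem_left _ _ h3, G₂.edge_mem_left _ _ h4⟩, h1⟩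
  edge_mem_right := by
    rintro p q ⟨h1, h2, h3, h4⟩
    simp only [Finset.mem_filter, Finset.mem_product]
    exact ⟨⟨G₁.edge_mem_right _ _ h3, G₂.edge_mem_right _ _ h4⟩, h2⟩
  edge_step := by
    rintro p q ⟨h1, h2, h3, h4⟩
    exact G₁.edge_step _ _ h3

/-- Isomorphism of hypercube graphs: an index- and edge-preserving bijection on vertices. -/
def Isomorphic (G : HypercubeGraph h V₁) (G' : HypercubeGraph h V₂) : Prop :=
  ∃ f : V₁ → V₂, Set.BijOn f ↑G.verts ↑G'.verts ∧
    (∀ v ∈ G.verts, G'.idx (f v) = G.idx v) ∧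
    (∀ u v : V₁, G.Edge u v ↔ G'.Edge (f u) (f v))

end HypercubeGraph

/-- The addition graph `G₊(A, B₁, …, B_h)`: vertex classes `U_I = A + ∑_{i ∈ I} B_i`
(in disjoint copies of the group), with edges `x → x + b` for `b ∈ B_i`. -/
def additionGraph {G : Type*} [AddCommGroup G] [DecidableEq G] (h : ℕ)
    (A : Finset G) (B : Fin h → Finset G) :
    HypercubeGraph h (Finset (Fin h) × G) where
  verts := (Finset.univ : Finset (Finset (Fin h))).biUnion fun I =>
    (A + ∑ i ∈ I, B i).image fun x => (I, x)
  idx p := p.1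
  Edge p q := p.2 ∈ A + ∑ i ∈ p.1, B i ∧
    ∃ i ∉ p.1, q.1 = insert i p.1 ∧ ∃ b ∈ B i, q.2 = p.2 + b
  edge_mem_left := by
    rintro ⟨I, x⟩ ⟨J, y⟩ ⟨hx, i, hi, rfl, b, hb, rfl⟩
    simp only [Finset.mem_biUnion, Finset.mem_univ, Finset.mem_image, true_and]
    exact ⟨I, x, hx, rfl⟩
  edge_mem_right := by
    rintro ⟨I, x⟩ ⟨J, y⟩ ⟨hx, i, hi, rfl, b, hb, rfl⟩
    simp only [Finset.mem_biUnion, Finset.mem_univ, Finset.mem_image, true_and]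
    refine ⟨insert i I, x + b, ?_, rfl⟩
    rw [Finset.sum_insert hi]
    have : A + (B i + ∑ j ∈ I, B j) = (A + ∑ j ∈ I, B j) + B i := by
      rw [add_comm (B i), ← add_assoc]
    rw [this]
    exact Finset.add_mem_add hx hb
  edge_step := by
    rintro ⟨I, x⟩ ⟨J, y⟩ ⟨hx, i, hi, rfl, b, hb, rfl⟩
    exact ⟨i, hi, rfl⟩

/-!
A path `(I, x) → (I ∪ {i}, x + b) → (I ∪ {i, j}, x + b + c)` with `b ∈ B i`, `c ∈ B j` of the
addition graph can be rerouted through `(I ∪ {j}, x + c)`, because `b + c = c + b`. Fixing the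
start (resp. the end) of the path, the new middle vertex is a translate of the end (resp. the
start), so distinct ends (starts) get distinct middle vertices.
-/

theorem injOn_const_prodMk_of_fst_eq {α β γ δ : Type*} {S : Set (α × β)} {a : α}
    (hS : ∀ p ∈ S, p.1 = a) (c : γ) {φ : β → δ} (hφ : Function.Injective φ) :
    Set.InjOn (fun p => (c, φ p.2)) S := by
  intro p hp q hq hpq
  exact Prod.ext ((hS p hp).trans (hS q hq).symm) (hφ (congrArg Prod.snd hpq))

theorem Finset.add_sum_insert_mem {G ι : Type*} [AddCommMonoid G] [DecidableEq G]
    [DecidableEq ι] {A : Finset G} {B : ι → Finset G} {I : Finset ι} {j : ι} (hj : j ∉ I)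
    {x c : G} (hx : x ∈ A + ∑ k ∈ I, B k) (hc : c ∈ B j) :
    x + c ∈ A + ∑ k ∈ insert j I, B k := by
  rw [sum_insert hj, add_left_comm, add_comm]
  exact add_mem_add hx hc

theorem Finset.union_insert_sdiff_of_notMem {α : Type*} [DecidableEq α] (I : Finset α)
    {J : Finset α} {j : α} (hj : j ∉ J) : I ∪ (insert j J \ J) = insert j I := by
  rw [insert_sdiff_cancel hj, union_singleton]

section additionGraph

variable {G : Type*} [AddCommGroup G] [DecidableEq G] {h : ℕ} {A : Finset G}
  {B : Fin h → Finset G}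

@[simp]
theorem additionGraph_idx (p : Finset (Fin h) × G) : (additionGraph h A B).idx p = p.1 := rfl

theorem additionGraph_edge_insert_iff {I : Finset (Fin h)} {i : Fin h} (hi : i ∉ I) {x y : G} :
    (additionGraph h A B).Edge (I, x) (insert i I, y) ↔
      x ∈ A + ∑ k ∈ I, B k ∧ y - x ∈ B i := by
  simp only [additionGraph, insert_inj hi]
  constructor
  · rintro ⟨hx, _, _, rfl, b, hb, rfl⟩
    exact ⟨hx, by simpa using hb⟩
  · rintro ⟨hx, hy⟩
    exact ⟨hx, i, hi, rfl, y - x, hy, by abel⟩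

theorem additionGraph_edge_edge_swap {I : Finset (Fin h)} {i j : Fin h} (hi : i ∉ I)
    (hj : j ∉ insert i I) {x y z : G}
    (hxy : (additionGraph h A B).Edge (I, x) (insert i I, y))
    (hyz : (additionGraph h A B).Edge (insert i I, y) (insert j (insert i I), z)) :
    (additionGraph h A B).Edge (I, x) (insert j I, x + (z - y)) ∧
      (additionGraph h A B).Edge (insert j I, x + (z - y)) (insert j (insert i I), z) := by
  have hjI : j ∉ I := fun hjI => hj (mem_insert_of_mem hjI)
  have hij : i ∉ insert j I := by
    rw [mem_insert, not_or]
    exact ⟨fun hij => hj (hij ▸ mem_insert_self i I), hi⟩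
  obtain ⟨hx, hxy⟩ := (additionGraph_edge_insert_iff hi).1 hxy
  obtain ⟨-, hyz⟩ := (additionGraph_edge_insert_iff hj).1 hyz
  rw [insert_comm, additionGraph_edge_insert_iff hjI, additionGraph_edge_insert_iff hij]
  refine ⟨⟨hx, by simpa using hyz⟩, add_sum_insert_mem hjI hx hyz, ?_⟩
  convert hxy using 1
  abel

end additionGraph

/-- The addition graph of finite sets in a commutative group is square commutative. -/
theorem additionGraph_squareComm {G : Type*} [AddCommGroup G] [DecidableEq G]
    (h : ℕ) (A : Finset G) (B : Fin h → Finset G) :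
    (additionGraph h A B).SquareComm := by
  constructor
  · rintro _ _ _ ⟨i, hi, rfl⟩ ⟨j, hj, rfl⟩ ⟨I, x⟩ ⟨_, y⟩ hv hv' hxy S hS
    simp only [additionGraph_idx] at hv hv' hS ⊢
    subst hv hv'
    refine ⟨fun w => (insert j I, x + (w.2 - y)),
      injOn_const_prodMk_of_fst_eq (fun w hw => (hS w hw).1) _
        ((add_right_injective x).comp sub_left_injective), ?_⟩
    rintro ⟨_, z⟩ hz
    obtain ⟨rfl, hyz⟩ := hS _ hz
    exact ⟨(union_insert_sdiff_of_notMem I hj).symm,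
      additionGraph_edge_edge_swap hi hj hxy hyz⟩
  · rintro I _ _ ⟨i, hi, rfl⟩ ⟨j, hj, rfl⟩ ⟨_, y⟩ ⟨_, z⟩ hv' hv'' hyz S hS
    simp only [additionGraph_idx] at hv' hv'' hS ⊢
    subst hv' hv''
    refine ⟨fun w => (insert j I, w.2 + (z - y)),
      injOn_const_prodMk_of_fst_eq (fun w hw => (hS w hw).1) _ (add_left_injective _), ?_⟩
    rintro ⟨J, x⟩ hx
    obtain ⟨hJ : J = I, hxy⟩ := hS _ hx
    subst J
    exact ⟨(union_insert_sdiff_of_notMem I hj).symm,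
      additionGraph_edge_edge_swap hi hj hxy hyz⟩
end

section
/- If G is a square commutative Q_h-hypercube graph and X ⊆ U_I, Y ⊆ U_{I'} with I ⊊ I', then the channel of G between X and Y (the subgraph induced by vertices lying on some path from X to Y) is a square commutative Q_j-hypercube graph, where j = |I' \ I|. -/
open Pointwise Finset

lemma HypercubeGraph.idx_subset_of_rtg {h : ℕ} {V : Type*} (G : HypercubeGraph h V) {a b : V}
    (hab : Relation.ReflTransGen G.Edge a b) : G.idx a ⊆ G.idx b := by
  induction hab with
  | refl => exact subset_rfl
  | tail _ hbc ih =>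
      obtain ⟨i, _, hins⟩ := G.edge_step _ _ hbc
      rw [hins]; exact ih.trans (Finset.subset_insert _ _)

open Classical in
/-- The channel of a square commutative `Q_h`-hypercube graph between `X ⊆ U_I` and
`Y ⊆ U_{I'}` (with `I ⊊ I'`) is a square commutative `Q_j`-hypercube graph, `j = |I' \\ I|`,
after reindexing by a bijection between `I' \\ I` and `Fin j`. -/
theorem channel_squareComm {V : Type*} (h : ℕ) (G : HypercubeGraph h V)
    (hG : G.SquareComm) (I I' : Finset (Fin h)) (hII : I ⊂ I')
    (X Y : Finset V) (hX : X ⊆ G.verts) (hY : Y ⊆ G.verts)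
    (hXI : ∀ v ∈ X, G.idx v = I) (hYI : ∀ v ∈ Y, G.idx v = I') :
    ∃ ι : Fin (I' \ I).card ↪ Fin h, Finset.univ.map ι = I' \ I ∧
      ∃ H : HypercubeGraph (I' \ I).card V,
        H.verts = G.verts.filter (fun v => ∃ x ∈ X, ∃ y ∈ Y,
          Relation.ReflTransGen G.Edge x v ∧ Relation.ReflTransGen G.Edge v y) ∧
        (∀ v ∈ H.verts, (H.idx v).map ι = G.idx v \ I) ∧
        (∀ u v : V, H.Edge u v ↔ (u ∈ H.verts ∧ v ∈ H.verts ∧ G.Edge u v)) ∧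
        H.SquareComm := by
  classical
  set j := (I' \ I).card with hj
  set ι : Fin j ↪ Fin h := ((I' \ I).orderEmbOfFin rfl).toEmbedding with hιdef
  have hιmap : Finset.univ.map ι = I' \ I := by
    ext a
    simp only [Finset.mem_map, Finset.mem_univ, true_and, hιdef,
      RelEmbedding.coe_toEmbedding]
    constructor
    · rintro ⟨k, rfl⟩; exact Finset.orderEmbOfFin_mem _ _ _
    · intro ha
      have := Finset.range_orderEmbOfFin (I' \ I) (rfl : (I' \ I).card = j)
      have : a ∈ Set.range ((I' \ I).orderEmbOfFin rfl) := by rw [this]; exact ha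
      obtain ⟨k, hk⟩ := this
      exact ⟨k, hk⟩
  have hιrange : ∀ a : Fin h, a ∈ I' \ I ↔ ∃ k, ι k = a := by
    intro a
    rw [← hιmap]
    simp
  set chan : Finset V := G.verts.filter (fun v => ∃ x ∈ X, ∃ y ∈ Y,
      Relation.ReflTransGen G.Edge x v ∧ Relation.ReflTransGen G.Edge v y) with hchandef
  have mem_chan : ∀ v : V, v ∈ chan ↔ v ∈ G.verts ∧ ∃ x ∈ X, ∃ y ∈ Y,
      Relation.ReflTransGen G.Edge x v ∧ Relation.ReflTransGen G.Edge v y := by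
    intro v; rw [hchandef]; simp
  have hbound : ∀ v ∈ chan, I ⊆ G.idx v ∧ G.idx v ⊆ I' := by
    intro v hv
    obtain ⟨-, x, hx, y, hy, hxv, hvy⟩ := (mem_chan v).1 hv
    constructor
    · rw [← hXI x hx]; exact G.idx_subset_of_rtg hxv
    · rw [← hYI y hy]; exact G.idx_subset_of_rtg hvy
  have hmap : ∀ v ∈ chan,
      (Finset.univ.filter (fun k => ι k ∈ G.idx v)).map ι = G.idx v \ I := by
    intro v hv
    obtain ⟨hIv, hvI'⟩ := hbound v hv
    ext a
    simp only [Finset.mem_map, Finset.mem_filter, Finset.mem_univ, true_and,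
      Finset.mem_sdiff]
    constructor
    · rintro ⟨k, hk, rfl⟩
      have : ι k ∈ I' \ I := (hιrange _).2 ⟨k, rfl⟩
      exact ⟨hk, (Finset.mem_sdiff.1 this).2⟩
    · rintro ⟨ha, haI⟩
      obtain ⟨k, rfl⟩ := (hιrange a).1 (Finset.mem_sdiff.2 ⟨hvI' ha, haI⟩)
      exact ⟨k, ha, rfl⟩
  have hrecon : ∀ v ∈ chan,
      G.idx v = I ∪ (Finset.univ.filter (fun k => ι k ∈ G.idx v)).map ι := by
    intro v hv
    rw [hmap v hv, Finset.union_sdiff_of_subset (hbound v hv).1]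
  have hmemiff : ∀ (v : V) (J : Finset (Fin j)),
      (Finset.univ.filter (fun k => ι k ∈ G.idx v)) = J →
      ∀ k, (ι k ∈ G.idx v ↔ k ∈ J) := by
    intro v J hJ k
    rw [← hJ]; simp
  refine ⟨ι, hιmap, ⟨{
    verts := chan
    idx := fun v => Finset.univ.filter (fun k => ι k ∈ G.idx v)
    Edge := fun u v => u ∈ chan ∧ v ∈ chan ∧ G.Edge u v
    edge_mem_left := fun u v hv => hv.1
    edge_mem_right := fun u v hv => hv.2.1
    edge_step := by
      rintro u v ⟨hu, hv, huv⟩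
      obtain ⟨i, hi, hins⟩ := G.edge_step _ _ huv
      have hiI' : i ∈ I' := (hbound v hv).2 (hins ▸ Finset.mem_insert_self i _)
      have hiI : i ∉ I := fun hiI => hi ((hbound u hu).1 hiI)
      obtain ⟨k, rfl⟩ := (hιrange i).1 (Finset.mem_sdiff.2 ⟨hiI', hiI⟩)
      refine ⟨k, by simpa using hi, ?_⟩
      ext k'
      simp only [Finset.mem_filter, Finset.mem_univ, true_and, Finset.mem_insert, hins]
      constructor
      · rintro (heq | hmem)
        · exact Or.inl (ι.injective heq)
        · exact Or.inr hmem
      · rintro (rfl | hmem)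
        · exact Or.inl rfl
        · exact Or.inr hmem }, rfl, ?_, ?_, ?_⟩⟩
  · exact hmap
  · intro u v; exact Iff.rfl
  · constructor
    · rintro J J' J'' - - v v' hvJ hv'J' ⟨hvc, hv'c, hvv'⟩ S hS
      rcases S.eq_empty_or_nonempty with rfl | ⟨w₀, hw₀⟩
      · exact ⟨id, by simp, by simp⟩
      obtain ⟨hw₀J'', hv'c', hw₀c, hv'w₀⟩ :
          (Finset.univ.filter (fun k => ι k ∈ G.idx w₀) = J'') ∧
          v' ∈ chan ∧ w₀ ∈ chan ∧ G.Edge v' w₀ := ⟨(hS w₀ hw₀).1, (hS w₀ hw₀).2⟩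
      have hSidx : ∀ w ∈ S, G.idx w = G.idx w₀ ∧ G.Edge v' w := by
        intro w hw
        obtain ⟨hwJ'', -, hwc, hv'w⟩ :
            (Finset.univ.filter (fun k => ι k ∈ G.idx w) = J'') ∧
            v' ∈ chan ∧ w ∈ chan ∧ G.Edge v' w := ⟨(hS w hw).1, (hS w hw).2⟩
        refine ⟨?_, hv'w⟩
        rw [hrecon w hwc, hrecon w₀ hw₀c, hwJ'', hw₀J'']
      obtain ⟨f, hfinj, hf⟩ := hG.1 (G.idx v) (G.idx v') (G.idx w₀)
        (G.edge_step _ _ hvv') (G.edge_step _ _ hv'w₀) v v' rfl rfl hvv' S hSidx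
      refine ⟨f, hfinj, fun w hw => ?_⟩
      obtain ⟨hidxfw, hvfw, hfww⟩ := hf w hw
      obtain ⟨hwJ'', -, hwc, hv'w⟩ :
          (Finset.univ.filter (fun k => ι k ∈ G.idx w) = J'') ∧
          v' ∈ chan ∧ w ∈ chan ∧ G.Edge v' w := ⟨(hS w hw).1, (hS w hw).2⟩
      have hfwc : f w ∈ chan := by
        rw [mem_chan]
        obtain ⟨-, x, hx, y0, hy0, hxv, -⟩ := (mem_chan v).1 hvc
        obtain ⟨-, x2, hx2, y, hy, hx2w, hwy⟩ := (mem_chan w).1 hwc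
        exact ⟨G.edge_mem_right _ _ hvfw, x, hx, y, hy,
          hxv.tail hvfw, Relation.ReflTransGen.head hfww hwy⟩
      refine ⟨?_, ⟨hvc, hfwc, hvfw⟩, ⟨hfwc, hwc, hfww⟩⟩
      ext k
      simp only [Finset.mem_filter, Finset.mem_univ, true_and, hidxfw,
        Finset.mem_union, Finset.mem_sdiff]
      rw [hmemiff v J hvJ, hmemiff v' J' hv'J', hmemiff w₀ J'' hw₀J'']
    · rintro J J' J'' - - v' v'' hv'J' hv''J'' ⟨hv'c, hv''c, hv'v''⟩ S hS
      rcases S.eq_empty_or_nonempty with rfl | ⟨w₀, hw₀⟩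
      · exact ⟨id, by simp, by simp⟩
      obtain ⟨hw₀J, hw₀c, -, hw₀v'⟩ :
          (Finset.univ.filter (fun k => ι k ∈ G.idx w₀) = J) ∧
          w₀ ∈ chan ∧ v' ∈ chan ∧ G.Edge w₀ v' := ⟨(hS w₀ hw₀).1, (hS w₀ hw₀).2⟩
      have hSidx : ∀ w ∈ S, G.idx w = G.idx w₀ ∧ G.Edge w v' := by
        intro w hw
        obtain ⟨hwJ, hwc, -, hwv'⟩ :
            (Finset.univ.filter (fun k => ι k ∈ G.idx w) = J) ∧
            w ∈ chan ∧ v' ∈ chan ∧ G.Edge w v' := ⟨(hS w hw).1, (hS w hw).2⟩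
        refine ⟨?_, hwv'⟩
        rw [hrecon w hwc, hrecon w₀ hw₀c, hwJ, hw₀J]
      obtain ⟨f, hfinj, hf⟩ := hG.2 (G.idx w₀) (G.idx v') (G.idx v'')
        (G.edge_step _ _ hw₀v') (G.edge_step _ _ hv'v'') v' v'' rfl rfl hv'v'' S hSidx
      refine ⟨f, hfinj, fun w hw => ?_⟩
      obtain ⟨hidxfw, hwfw, hfwv''⟩ := hf w hw
      obtain ⟨hwJ, hwc, -, hwv'⟩ :
          (Finset.univ.filter (fun k => ι k ∈ G.idx w) = J) ∧
          w ∈ chan ∧ v' ∈ chan ∧ G.Edge w v' := ⟨(hS w hw).1, (hS w hw).2⟩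
      have hfwc : f w ∈ chan := by
        rw [mem_chan]
        obtain ⟨-, x, hx, y0, hy0, hxw, -⟩ := (mem_chan w).1 hwc
        obtain ⟨-, x2, hx2, y, hy, hx2v, hv''y⟩ := (mem_chan v'').1 hv''c
        exact ⟨G.edge_mem_right _ _ hwfw, x, hx, y, hy,
          hxw.tail hwfw, Relation.ReflTransGen.head hfwv'' hv''y⟩
      refine ⟨?_, ⟨hwc, hfwc, hwfw⟩, ⟨hfwc, hv''c, hfwv''⟩⟩
      ext k
      simp only [Finset.mem_filter, Finset.mem_univ, true_and, hidxfw,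
        Finset.mem_union, Finset.mem_sdiff]
      rw [hmemiff w₀ J hw₀J, hmemiff v' J' hv'J', hmemiff v'' J'' hv''J'']
end

section
/- The hypercube product of two square commutative Q_h-hypercube graphs is square commutative. -/
open Pointwise Finset

/-- The hypercube product of two square commutative hypercube graphs is square
commutative. -/
theorem prod_squareComm {V₁ V₂ : Type*} (h : ℕ)
    (G₁ : HypercubeGraph h V₁) (G₂ : HypercubeGraph h V₂)
    (h₁ : G₁.SquareComm) (h₂ : G₂.SquareComm) :
    (G₁.prod G₂).SquareComm := by
  classical
  constructor
  · rintro I I' I'' hs1 hs2 v v' hv hv' ⟨he1, he2, he3, he4⟩ S hS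
    have hS1 : ∀ w₁ ∈ S.image Prod.fst, G₁.idx w₁ = I'' ∧ G₁.Edge v'.1 w₁ := by
      intro w₁ hw₁
      simp only [Finset.mem_image] at hw₁
      obtain ⟨w, hw, rfl⟩ := hw₁
      obtain ⟨hwi, _, _, hwe, _⟩ := hS w hw
      exact ⟨hwi, hwe⟩
    have hS2 : ∀ w₂ ∈ S.image Prod.snd, G₂.idx w₂ = I'' ∧ G₂.Edge v'.2 w₂ := by
      intro w₂ hw₂
      simp only [Finset.mem_image] at hw₂
      obtain ⟨w, hw, rfl⟩ := hw₂
      obtain ⟨hwi, f1, f2, _, hwe⟩ := hS w hw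
      exact ⟨f2 ▸ hwi, hwe⟩
    obtain ⟨f₁, hf₁inj, hf₁⟩ := h₁.1 I I' I'' hs1 hs2 v.1 v'.1 hv hv' he3 (S.image Prod.fst) hS1
    obtain ⟨f₂, hf₂inj, hf₂⟩ := h₂.1 I I' I'' hs1 hs2 v.2 v'.2 (he1 ▸ hv) (he2 ▸ hv') he4
      (S.image Prod.snd) hS2
    refine ⟨fun p => (f₁ p.1, f₂ p.2), ?_, ?_⟩
    · intro a ha b hb hab
      simp only [Finset.coe_image] at *
      have h1 : a.1 = b.1 := hf₁inj (Set.mem_image_of_mem _ ha) (Set.mem_image_of_mem _ hb)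
        (congrArg Prod.fst hab)
      have h2 : a.2 = b.2 := hf₂inj (Set.mem_image_of_mem _ ha) (Set.mem_image_of_mem _ hb)
        (congrArg Prod.snd hab)
      exact Prod.ext h1 h2
    · intro w hw
      obtain ⟨hwi, g1, g2, _, _⟩ := hS w hw
      obtain ⟨hi1, he1', hf1'⟩ := hf₁ w.1 (Finset.mem_image_of_mem _ hw)
      obtain ⟨hi2, he2', hf2'⟩ := hf₂ w.2 (Finset.mem_image_of_mem _ hw)
      exact ⟨hi1, ⟨he1, hi1.trans hi2.symm, he1', he2'⟩, ⟨hi1.trans hi2.symm, g2, hf1', hf2'⟩⟩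
  · rintro I I' I'' hs1 hs2 v' v'' hv' hv'' ⟨he1, he2, he3, he4⟩ S hS
    have hS1 : ∀ w₁ ∈ S.image Prod.fst, G₁.idx w₁ = I ∧ G₁.Edge w₁ v'.1 := by
      intro w₁ hw₁
      simp only [Finset.mem_image] at hw₁
      obtain ⟨w, hw, rfl⟩ := hw₁
      obtain ⟨hwi, _, _, hwe, _⟩ := hS w hw
      exact ⟨hwi, hwe⟩
    have hS2 : ∀ w₂ ∈ S.image Prod.snd, G₂.idx w₂ = I ∧ G₂.Edge w₂ v'.2 := by
      intro w₂ hw₂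
      simp only [Finset.mem_image] at hw₂
      obtain ⟨w, hw, rfl⟩ := hw₂
      obtain ⟨hwi, f1, f2, _, hwe⟩ := hS w hw
      exact ⟨f1 ▸ hwi, hwe⟩
    obtain ⟨f₁, hf₁inj, hf₁⟩ := h₁.2 I I' I'' hs1 hs2 v'.1 v''.1 hv' hv'' he3
      (S.image Prod.fst) hS1
    obtain ⟨f₂, hf₂inj, hf₂⟩ := h₂.2 I I' I'' hs1 hs2 v'.2 v''.2 (he1 ▸ hv') (he2 ▸ hv'') he4
      (S.image Prod.snd) hS2
    refine ⟨fun p => (f₁ p.1, f₂ p.2), ?_, ?_⟩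
    · intro a ha b hb hab
      simp only [Finset.coe_image] at *
      have h1 : a.1 = b.1 := hf₁inj (Set.mem_image_of_mem _ ha) (Set.mem_image_of_mem _ hb)
        (congrArg Prod.fst hab)
      have h2 : a.2 = b.2 := hf₂inj (Set.mem_image_of_mem _ ha) (Set.mem_image_of_mem _ hb)
        (congrArg Prod.snd hab)
      exact Prod.ext h1 h2
    · intro w hw
      obtain ⟨hwi, g1, g2, _, _⟩ := hS w hw
      obtain ⟨hi1, he1', hf1'⟩ := hf₁ w.1 (Finset.mem_image_of_mem _ hw)
      obtain ⟨hi2, he2', hf2'⟩ := hf₂ w.2 (Finset.mem_image_of_mem _ hw)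
      exact ⟨hi1, ⟨g1, hi1.trans hi2.symm, he1', he2'⟩, ⟨hi1.trans hi2.symm, he2, hf1', hf2'⟩⟩
end

section
/- Let G_1, G_2 be square commutative Q_h-hypercube graphs and G_3 = G_1 ⊗ G_2 their hypercube product. Then the top magnification ratio is multiplicative: μ_h(G_3) = μ_h(G_1)·μ_h(G_2). -/
open Pointwise Finset

namespace HypercubeGraph

variable {h : ℕ} {V V₁ V₂ : Type*}

/-- Paths recording the list of inserted indices. -/
inductive PathL (G : HypercubeGraph h V) : V → V → List (Fin h) → Prop
  | refl (v : V) : PathL G v v []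
  | cons {u v w : V} {i : Fin h} {L : List (Fin h)} :
      G.Edge u v → i ∉ G.idx u → G.idx v = insert i (G.idx u) →
      PathL G v w L → PathL G u w (i :: L)

lemma pathL_of_rtg {G : HypercubeGraph h V} {z v : V}
    (hp : Relation.ReflTransGen G.Edge z v) : ∃ L, G.PathL z v L := by
  induction hp using Relation.ReflTransGen.head_induction_on with
  | refl => exact ⟨[], PathL.refl v⟩
  | head e _ ih =>
    obtain ⟨L, hL⟩ := ih
    obtain ⟨i, hi, hidx⟩ := _root_.HypercubeGraph.edge_step _ _ _ e
    exact ⟨i :: L, PathL.cons e hi hidx hL⟩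

lemma rtg_of_pathL {G : HypercubeGraph h V} {z v : V} {L : List (Fin h)}
    (hp : G.PathL z v L) : Relation.ReflTransGen G.Edge z v := by
  induction hp with
  | refl => exact .refl
  | cons e _ _ _ ih => exact .head e ih

lemma pathL_spec {G : HypercubeGraph h V} {u w : V} {L : List (Fin h)} (hp : G.PathL u w L) :
    G.idx w = G.idx u ∪ L.toFinset ∧ L.Nodup ∧ ∀ i ∈ L, i ∉ G.idx u := by
  induction hp with
  | refl => simp
  | @cons u v w i L e hi hidx _ ih =>
    obtain ⟨h1, h2, h3⟩ := ih
    refine ⟨?_, ?_, ?_⟩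
    · rw [h1, hidx, List.toFinset_cons]
      ext j
      simp only [Finset.mem_union, Finset.mem_insert, List.mem_toFinset]
      tauto
    · refine List.nodup_cons.2 ⟨fun hiL => ?_, h2⟩
      exact h3 i hiL (hidx ▸ Finset.mem_insert_self i _)
    · intro j hj
      rcases List.mem_cons.1 hj with rfl | hj
      · exact hi
      · intro hju
        exact h3 j hj (hidx ▸ Finset.mem_insert_of_mem hju)

lemma pathL_perm {G : HypercubeGraph h V} (hG : G.SquareComm) {u w : V} {L L' : List (Fin h)}
    (hp : G.PathL u w L) (hperm : L.Perm L') : G.PathL u w L' := by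
  induction hperm generalizing u with
  | nil => exact hp
  | cons x _ ih =>
    cases hp with
    | cons e hi hidx hp' => exact PathL.cons e hi hidx (ih hp')
  | swap x y l =>
    cases hp with
    | @cons _ a _ _ _ e₁ hy hidxa hp₁ =>
      cases hp₁ with
      | @cons _ b _ _ _ e₂ hx hidxb hp₂ =>
        have hstep₁ : Step (G.idx u) (G.idx a) := ⟨y, hy, hidxa⟩
        have hstep₂ : Step (G.idx a) (G.idx b) := ⟨x, hx, hidxb⟩
        obtain ⟨f, -, hf⟩ := hG.1 (G.idx u) (G.idx a) (G.idx b) hstep₁ hstep₂ u a rfl rfl e₁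
          {b} (by
            intro w hw
            rw [Finset.mem_singleton] at hw
            subst hw
            exact ⟨rfl, e₂⟩)
        obtain ⟨hcidx0, huc, hcb⟩ := hf b (Finset.mem_singleton_self b)
        have hxy : x ≠ y := fun hxy => hx (hidxa ▸ (hxy ▸ Finset.mem_insert_self y (G.idx u)))
        have hxu : x ∉ G.idx u := fun hxu => hx (hidxa ▸ Finset.mem_insert_of_mem hxu)
        have hyu : y ∉ G.idx u := hy
        have hsd : G.idx b \ G.idx a = {x} := by
          ext j
          simp only [hidxb, Finset.mem_sdiff, Finset.mem_insert, Finset.mem_singleton]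
          constructor
          · rintro ⟨hj | hj, hj2⟩
            · exact hj
            · exact absurd hj hj2
          · rintro rfl
            exact ⟨Or.inl rfl, hx⟩
        have hcidx : G.idx (f b) = insert x (G.idx u) := by
          rw [hcidx0, hsd, Finset.union_comm, ← Finset.insert_eq]
        have hyc : y ∉ G.idx (f b) := by
          rw [hcidx]
          simp only [Finset.mem_insert]
          rintro (rfl | hyu')
          · exact hxy rfl
          · exact hyu hyu'
        have hbidx : G.idx b = insert y (G.idx (f b)) := by
          rw [hcidx, hidxb, hidxa, Finset.insert_comm]
        exact PathL.cons huc hxu hcidx (PathL.cons hcb hyc hbidx hp₂)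
  | trans _ _ ih₁ ih₂ => exact ih₂ (ih₁ hp)

lemma pathL_prod {G₁ : HypercubeGraph h V₁} {G₂ : HypercubeGraph h V₂}
    {z₁ v₁ : V₁} {z₂ v₂ : V₂} {L : List (Fin h)}
    (hp₁ : G₁.PathL z₁ v₁ L) (hp₂ : G₂.PathL z₂ v₂ L) (hidx : G₁.idx z₁ = G₂.idx z₂) :
    (G₁.prod G₂).PathL (z₁, z₂) (v₁, v₂) L := by
  induction hp₁ generalizing z₂ with
  | refl =>
    cases hp₂ with
    | refl => exact PathL.refl _
  | @cons u a _ i L e hi hidx1 _ ih =>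
    cases hp₂ with
    | @cons _ b _ _ _ e₂ hi₂ hidx2 hp₂' =>
      have hab : G₁.idx a = G₂.idx b := by rw [hidx1, hidx2, hidx]
      exact PathL.cons (v := (a, b)) ⟨hidx, hab, e, e₂⟩ hi hidx1 (ih hp₂' hab)

lemma rtg_prod_proj {G₁ : HypercubeGraph h V₁} {G₂ : HypercubeGraph h V₂} {p q : V₁ × V₂}
    (hp : Relation.ReflTransGen (G₁.prod G₂).Edge p q) :
    Relation.ReflTransGen G₁.Edge p.1 q.1 ∧ Relation.ReflTransGen G₂.Edge p.2 q.2 := by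
  induction hp with
  | refl => exact ⟨.refl, .refl⟩
  | tail _ e ih => exact ⟨ih.1.tail e.2.2.1, ih.2.tail e.2.2.2⟩

lemma rtg_prod_top {G₁ : HypercubeGraph h V₁} {G₂ : HypercubeGraph h V₂}
    (hG₁ : G₁.SquareComm) {z₁ v₁ : V₁} {z₂ v₂ : V₂}
    (hz₁ : G₁.idx z₁ = ∅) (hz₂ : G₂.idx z₂ = ∅)
    (hv₁ : G₁.idx v₁ = Finset.univ) (hv₂ : G₂.idx v₂ = Finset.univ)
    (r₁ : Relation.ReflTransGen G₁.Edge z₁ v₁) (r₂ : Relation.ReflTransGen G₂.Edge z₂ v₂) :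
    Relation.ReflTransGen (G₁.prod G₂).Edge (z₁, z₂) (v₁, v₂) := by
  obtain ⟨L₁, hL₁⟩ := pathL_of_rtg r₁
  obtain ⟨L₂, hL₂⟩ := pathL_of_rtg r₂
  obtain ⟨e₁, n₁, -⟩ := pathL_spec hL₁
  obtain ⟨e₂, n₂, -⟩ := pathL_spec hL₂
  rw [hz₁, Finset.empty_union] at e₁
  rw [hz₂, Finset.empty_union] at e₂
  have ht : L₁.toFinset = L₂.toFinset := by rw [← e₁, ← e₂, hv₁, hv₂]
  have hperm : L₁.Perm L₂ := List.perm_of_nodup_nodup_toFinset_eq n₁ n₂ ht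
  exact rtg_of_pathL (pathL_prod (pathL_perm hG₁ hL₁ hperm) hL₂ (by rw [hz₁, hz₂]))

lemma mem_ImL {G : HypercubeGraph h V} {Z : Finset V} {i : ℕ} {v : V} :
    v ∈ G.ImL Z i ↔ v ∈ G.verts ∧ (G.idx v).card = i ∧
      ∃ z ∈ Z, Relation.ReflTransGen G.Edge z v := by
  simp [ImL, Finset.mem_filter, and_assoc]

lemma mem_bottom {G : HypercubeGraph h V} {v : V} :
    v ∈ G.bottom ↔ v ∈ G.verts ∧ G.idx v = ∅ := by
  simp [bottom, Finset.mem_filter]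

lemma mem_prod_verts {G₁ : HypercubeGraph h V₁} {G₂ : HypercubeGraph h V₂} {p : V₁ × V₂} :
    p ∈ (G₁.prod G₂).verts ↔
      p.1 ∈ G₁.verts ∧ p.2 ∈ G₂.verts ∧ G₁.idx p.1 = G₂.idx p.2 := by
  simp [prod, Finset.mem_filter, Finset.mem_product, and_assoc]

lemma bottom_prod {G₁ : HypercubeGraph h V₁} {G₂ : HypercubeGraph h V₂} :
    (G₁.prod G₂).bottom = G₁.bottom ×ˢ G₂.bottom := by
  ext p
  simp only [mem_bottom, mem_prod_verts, Finset.mem_product]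
  constructor
  · rintro ⟨⟨h1, h2, h3⟩, h4⟩
    have h4' : G₁.idx p.1 = ∅ := h4
    exact ⟨⟨h1, h4'⟩, h2, h3 ▸ h4'⟩
  · rintro ⟨⟨h1, h4⟩, h2, h5⟩
    exact ⟨⟨h1, h2, h4.trans h5.symm⟩, h4⟩

lemma card_idx_top {G : HypercubeGraph h V} {v : V} :
    (G.idx v).card = h ↔ G.idx v = Finset.univ := by
  constructor
  · intro hc
    exact Finset.eq_univ_of_card _ (by rw [hc, Fintype.card_fin])
  · intro he
    rw [he, Finset.card_univ, Fintype.card_fin]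

lemma mu_le {G : HypercubeGraph h V} {i : ℕ} {Z : Finset V} (hne : Z.Nonempty)
    (hsub : Z ⊆ G.bottom) : G.mu i ≤ ((G.ImL Z i).card : ℝ) / (Z.card : ℝ) := by
  refine csInf_le ⟨0, ?_⟩ ⟨Z, hne, hsub, rfl⟩
  rintro r ⟨Z', hne', -, rfl⟩
  positivity

lemma mu_nonneg (G : HypercubeGraph h V) (i : ℕ) (hb : G.bottom.Nonempty) :
    0 ≤ G.mu i := by
  refine le_csInf ⟨_, G.bottom, hb, subset_rfl, rfl⟩ ?_
  rintro r ⟨Z', hne', -, rfl⟩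
  positivity

lemma exists_mu_eq (G : HypercubeGraph h V) (i : ℕ) (hb : G.bottom.Nonempty) :
    ∃ Z : Finset V, Z.Nonempty ∧ Z ⊆ G.bottom ∧
      G.mu i = ((G.ImL Z i).card : ℝ) / (Z.card : ℝ) := by
  have hfin : {r : ℝ | ∃ Z : Finset V, Z.Nonempty ∧ Z ⊆ G.bottom ∧
      r = ((G.ImL Z i).card : ℝ) / (Z.card : ℝ)}.Finite := by
    apply Set.Finite.subset (Set.Finite.image
      (fun Z : Finset V => ((G.ImL Z i).card : ℝ) / (Z.card : ℝ))
      (G.bottom.powerset : Finset (Finset V)).finite_toSet)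
    rintro r ⟨Z, hne, hsub, rfl⟩
    exact ⟨Z, by simpa [Finset.mem_powerset] using hsub, rfl⟩
  have hne : {r : ℝ | ∃ Z : Finset V, Z.Nonempty ∧ Z ⊆ G.bottom ∧
      r = ((G.ImL Z i).card : ℝ) / (Z.card : ℝ)}.Nonempty :=
    ⟨_, G.bottom, hb, subset_rfl, rfl⟩
  exact hne.csInf_mem hfin

lemma ImL_eq_biUnion {G : HypercubeGraph h V} [DecidableEq V] (Z : Finset V) (i : ℕ) :
    G.ImL Z i = Z.biUnion fun z => G.ImL {z} i := by
  ext v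
  simp only [mem_ImL, Finset.mem_biUnion, Finset.mem_singleton, exists_eq_left]
  constructor
  · rintro ⟨h1, h2, z, hz, h3⟩
    exact ⟨z, hz, h1, h2, h3⟩
  · rintro ⟨z, hz, h1, h2, h3⟩
    exact ⟨h1, h2, z, hz, h3⟩

lemma ImL_top_prod {G₁ : HypercubeGraph h V₁} {G₂ : HypercubeGraph h V₂}
    [DecidableEq V₁] [DecidableEq V₂] (hG₁ : G₁.SquareComm) {Z : Finset (V₁ × V₂)}
    (hZ : Z ⊆ (G₁.prod G₂).bottom) :
    (G₁.prod G₂).ImL Z h = Z.biUnion fun z => (G₁.ImL {z.1} h) ×ˢ (G₂.ImL {z.2} h) := by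
  ext ⟨v₁, v₂⟩
  simp only [Finset.mem_biUnion, Finset.mem_product, mem_ImL, Finset.mem_singleton,
    exists_eq_left]
  constructor
  · rintro ⟨hv, hcard, z, hzZ, hreach⟩
    obtain ⟨hv1, hv2, hvidx⟩ := mem_prod_verts.1 hv
    have hcard₁ : (G₁.idx v₁).card = h := hcard
    have hcard₂ : (G₂.idx v₂).card = h := by rw [← hvidx]; exact hcard₁
    obtain ⟨r₁, r₂⟩ := rtg_prod_proj hreach
    exact ⟨z, hzZ, ⟨hv1, hcard₁, r₁⟩, hv2, hcard₂, r₂⟩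
  · rintro ⟨z, hzZ, ⟨hv1, hcard₁, r₁⟩, hv2, hcard₂, r₂⟩
    have huniv₁ : G₁.idx v₁ = Finset.univ := card_idx_top.1 hcard₁
    have huniv₂ : G₂.idx v₂ = Finset.univ := card_idx_top.1 hcard₂
    obtain ⟨hzv, hz1⟩ := mem_bottom.1 (hZ hzZ)
    obtain ⟨-, -, hzidx⟩ := mem_prod_verts.1 hzv
    have hz1' : G₁.idx z.1 = ∅ := hz1
    have hz2 : G₂.idx z.2 = ∅ := by rw [← hzidx]; exact hz1'
    have hreach := rtg_prod_top hG₁ hz1' hz2 huniv₁ huniv₂ r₁ r₂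
    exact ⟨mem_prod_verts.2 ⟨hv1, hv2, huniv₁.trans huniv₂.symm⟩, hcard₁, z, hzZ, hreach⟩

lemma ImL_top_prod_subset {G₁ : HypercubeGraph h V₁} {G₂ : HypercubeGraph h V₂}
    {Z₁ : Finset V₁} {Z₂ : Finset V₂} :
    (G₁.prod G₂).ImL (Z₁ ×ˢ Z₂) h ⊆ (G₁.ImL Z₁ h) ×ˢ (G₂.ImL Z₂ h) := by
  rintro ⟨v₁, v₂⟩ hv
  obtain ⟨hv, hcard, z, hzZ, hreach⟩ := mem_ImL.1 hv
  obtain ⟨hv1, hv2, hvidx⟩ := mem_prod_verts.1 hv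
  obtain ⟨hz1, hz2⟩ := Finset.mem_product.1 hzZ
  obtain ⟨r₁, r₂⟩ := rtg_prod_proj hreach
  have hcard₁ : (G₁.idx v₁).card = h := hcard
  have hcard₂ : (G₂.idx v₂).card = h := by rw [← hvidx]; exact hcard₁
  exact Finset.mem_product.2 ⟨mem_ImL.2 ⟨hv1, hcard₁, z.1, hz1, r₁⟩,
    mem_ImL.2 ⟨hv2, hcard₂, z.2, hz2, r₂⟩⟩

lemma counting {α β : Type*} [DecidableEq α] [DecidableEq β]
    (A : α → Finset α) (B : β → Finset β) (Z : Finset (α × β)) (μ₁ μ₂ : ℝ) (hμ₂ : 0 ≤ μ₂)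
    (hA : ∀ X : Finset α, X.Nonempty → X ⊆ Z.image Prod.fst →
      μ₁ * X.card ≤ ((X.biUnion A).card : ℝ))
    (hB : ∀ Y : Finset β, Y.Nonempty → Y ⊆ Z.image Prod.snd →
      μ₂ * Y.card ≤ ((Y.biUnion B).card : ℝ)) :
    μ₁ * μ₂ * Z.card ≤ ((Z.biUnion fun z => A z.1 ×ˢ B z.2).card : ℝ) := by
  classical
  set T := Z.biUnion fun z => A z.1 ×ˢ B z.2 with hT
  set P := Z.biUnion fun z => A z.1 with hP
  set Q := Z.image Prod.snd with hQ
  set Ya := fun a => (Z.filter fun z => a ∈ A z.1).image Prod.snd with hYa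
  set Wy := fun y => ((Z.filter fun z => z.2 = y).image Prod.fst).biUnion A with hWy
  set D := Z.biUnion fun z => (A z.1).image fun a => (a, z.2) with hD
  have hmemT : ∀ a b, ((a, b) ∈ T ↔ ∃ z ∈ Z, a ∈ A z.1 ∧ b ∈ B z.2) := by
    intro a b
    simp [hT, Finset.mem_biUnion, Finset.mem_product]
  have hmemP : ∀ a, (a ∈ P ↔ ∃ z ∈ Z, a ∈ A z.1) := by
    intro a
    simp [hP, Finset.mem_biUnion]
  have hmemQ : ∀ y, (y ∈ Q ↔ ∃ z ∈ Z, z.2 = y) := by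
    intro y
    simp [hQ, Finset.mem_image]
  have hmemYa : ∀ a y, (y ∈ Ya a ↔ ∃ z ∈ Z, z.2 = y ∧ a ∈ A z.1) := by
    intro a y
    simp only [hYa, Finset.mem_image, Finset.mem_filter]
    constructor
    · rintro ⟨z, ⟨hz, ha⟩, rfl⟩
      exact ⟨z, hz, rfl, ha⟩
    · rintro ⟨z, hz, rfl, ha⟩
      exact ⟨z, ⟨hz, ha⟩, rfl⟩
  have hmemWy : ∀ y a, (a ∈ Wy y ↔ ∃ z ∈ Z, z.2 = y ∧ a ∈ A z.1) := by
    intro y a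
    simp only [hWy, Finset.mem_biUnion, Finset.mem_image, Finset.mem_filter]
    constructor
    · rintro ⟨x, ⟨z, ⟨hz, hz2⟩, rfl⟩, ha⟩
      exact ⟨z, hz, hz2, ha⟩
    · rintro ⟨z, hz, hz2, ha⟩
      exact ⟨z.1, ⟨z, ⟨hz, hz2⟩, rfl⟩, ha⟩
  have hmemD : ∀ a y, ((a, y) ∈ D ↔ ∃ z ∈ Z, z.2 = y ∧ a ∈ A z.1) := by
    intro a y
    simp only [hD, Finset.mem_biUnion, Finset.mem_image, Prod.mk.injEq]
    constructor
    · rintro ⟨z, hz, a', ha', rfl, rfl⟩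
      exact ⟨z, hz, rfl, ha'⟩
    · rintro ⟨z, hz, rfl, ha⟩
      exact ⟨z, hz, a, ha, rfl, rfl⟩
  have hinjR : ∀ a : α, Function.Injective (fun b : β => (a, b)) :=
    fun a b₁ b₂ e => congrArg Prod.snd e
  have hinjL : ∀ y : β, Function.Injective (fun a : α => (a, y)) :=
    fun y a₁ a₂ e => congrArg Prod.fst e
  -- fiber of T over a
  have hTfib : ∀ a, T.filter (fun p => p.1 = a) = ((Ya a).biUnion B).image fun b => (a, b) := by
    intro a
    ext ⟨c, b⟩
    simp only [Finset.mem_filter, Finset.mem_image, Finset.mem_biUnion, Prod.mk.injEq]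
    constructor
    · rintro ⟨hcb, rfl⟩
      obtain ⟨z, hz, ha, hb⟩ := (hmemT _ _).1 hcb
      exact ⟨b, ⟨z.2, (hmemYa _ _).2 ⟨z, hz, rfl, ha⟩, hb⟩, rfl, rfl⟩
    · rintro ⟨b', ⟨y, hy, hb⟩, rfl, rfl⟩
      obtain ⟨z, hz, hz2, ha⟩ := (hmemYa _ _).1 hy
      exact ⟨(hmemT _ _).2 ⟨z, hz, ha, hz2 ▸ hb⟩, rfl⟩
  -- fibers of D
  have hDfib1 : ∀ a, D.filter (fun p => p.1 = a) = (Ya a).image fun y => (a, y) := by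
    intro a
    ext ⟨c, y⟩
    simp only [Finset.mem_filter, Finset.mem_image, Prod.mk.injEq]
    constructor
    · rintro ⟨hcy, rfl⟩
      exact ⟨y, (hmemYa _ _).2 ((hmemD _ _).1 hcy), rfl, rfl⟩
    · rintro ⟨y', hy', rfl, rfl⟩
      exact ⟨(hmemD _ _).2 ((hmemYa _ _).1 hy'), rfl⟩
  have hDfib2 : ∀ y, D.filter (fun p => p.2 = y) = (Wy y).image fun a => (a, y) := by
    intro y
    ext ⟨a, c⟩
    simp only [Finset.mem_filter, Finset.mem_image, Prod.mk.injEq]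
    constructor
    · rintro ⟨hac, rfl⟩
      exact ⟨a, (hmemWy _ _).2 ((hmemD _ _).1 hac), rfl, rfl⟩
    · rintro ⟨a', ha', rfl, rfl⟩
      exact ⟨(hmemD _ _).2 ((hmemWy _ _).1 ha'), rfl⟩
  -- card identities
  have c1 : (T.card : ℝ) = ∑ a ∈ P, (((Ya a).biUnion B).card : ℝ) := by
    have hfib : ∀ p ∈ T, p.1 ∈ P := by
      rintro ⟨a, b⟩ hp
      obtain ⟨z, hz, ha, -⟩ := (hmemT _ _).1 hp
      exact (hmemP a).2 ⟨z, hz, ha⟩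
    rw [Finset.card_eq_sum_card_fiberwise hfib]
    push_cast
    refine Finset.sum_congr rfl fun a _ => ?_
    rw [hTfib a, Finset.card_image_of_injective _ (hinjR a)]
  have c3 : (D.card : ℝ) = ∑ a ∈ P, ((Ya a).card : ℝ) := by
    have hfib : ∀ p ∈ D, p.1 ∈ P := by
      rintro ⟨a, y⟩ hp
      obtain ⟨z, hz, -, ha⟩ := (hmemD _ _).1 hp
      exact (hmemP a).2 ⟨z, hz, ha⟩
    rw [Finset.card_eq_sum_card_fiberwise hfib]
    push_cast
    refine Finset.sum_congr rfl fun a _ => ?_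
    rw [hDfib1 a, Finset.card_image_of_injective _ (hinjR a)]
  have c4 : (D.card : ℝ) = ∑ y ∈ Q, ((Wy y).card : ℝ) := by
    have hfib : ∀ p ∈ D, p.2 ∈ Q := by
      rintro ⟨a, y⟩ hp
      obtain ⟨z, hz, hz2, -⟩ := (hmemD _ _).1 hp
      exact (hmemQ y).2 ⟨z, hz, hz2⟩
    rw [Finset.card_eq_sum_card_fiberwise hfib]
    push_cast
    refine Finset.sum_congr rfl fun y _ => ?_
    rw [hDfib2 y, Finset.card_image_of_injective _ (hinjL y)]
  have c6 : (Z.card : ℝ) = ∑ y ∈ Q, ((Z.filter fun z => z.2 = y).card : ℝ) := by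
    have hfib : ∀ z ∈ Z, z.2 ∈ Q := fun z hz => (hmemQ z.2).2 ⟨z, hz, rfl⟩
    rw [Finset.card_eq_sum_card_fiberwise hfib]
    push_cast
    rfl
  -- inequalities
  have c2 : ∀ a ∈ P, μ₂ * ((Ya a).card : ℝ) ≤ (((Ya a).biUnion B).card : ℝ) := by
    intro a ha
    refine hB _ ?_ ?_
    · obtain ⟨z, hz, haz⟩ := (hmemP a).1 ha
      exact ⟨z.2, (hmemYa _ _).2 ⟨z, hz, rfl, haz⟩⟩
    · intro y hy
      obtain ⟨z, hz, hz2, -⟩ := (hmemYa _ _).1 hy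
      exact Finset.mem_image.2 ⟨z, hz, hz2⟩
  have c5 : ∀ y ∈ Q, μ₁ * (((Z.filter fun z => z.2 = y).card : ℝ)) ≤ ((Wy y).card : ℝ) := by
    intro y hy
    have hXcard : ((Z.filter fun z => z.2 = y).image Prod.fst).card
        = (Z.filter fun z => z.2 = y).card := by
      refine Finset.card_image_of_injOn ?_
      intro z hz z' hz' hzz
      have hz2 := (Finset.mem_filter.1 hz).2
      have hz2' := (Finset.mem_filter.1 hz').2
      exact Prod.ext hzz (hz2.trans hz2'.symm)
    have hXne : ((Z.filter fun z => z.2 = y).image Prod.fst).Nonempty := by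
      obtain ⟨z, hz, hz2⟩ := (hmemQ y).1 hy
      exact ⟨z.1, Finset.mem_image.2 ⟨z, Finset.mem_filter.2 ⟨hz, hz2⟩, rfl⟩⟩
    have hXsub : ((Z.filter fun z => z.2 = y).image Prod.fst) ⊆ Z.image Prod.fst :=
      Finset.image_subset_image (Finset.filter_subset _ _)
    have := hA _ hXne hXsub
    rw [hXcard] at this
    exact this
  have e1 : μ₁ * (Z.card : ℝ) ≤ (D.card : ℝ) := by
    rw [c4, c6, Finset.mul_sum]
    exact Finset.sum_le_sum c5
  have e2 : μ₂ * (D.card : ℝ) ≤ (T.card : ℝ) := by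
    rw [c1, c3, Finset.mul_sum]
    exact Finset.sum_le_sum c2
  calc μ₁ * μ₂ * (Z.card : ℝ) = μ₂ * (μ₁ * (Z.card : ℝ)) := by ring
    _ ≤ μ₂ * (D.card : ℝ) := mul_le_mul_of_nonneg_left e1 hμ₂
    _ ≤ (T.card : ℝ) := e2

end HypercubeGraph

/-- The top magnification ratio is multiplicative with respect to hypercube products
of square commutative hypercube graphs. -/
theorem mu_top_mul {V₁ V₂ : Type*} (h : ℕ)
    (G₁ : HypercubeGraph h V₁) (G₂ : HypercubeGraph h V₂)
    (h₁ : G₁.SquareComm) (h₂ : G₂.SquareComm)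
    (hb₁ : G₁.bottom.Nonempty) (hb₂ : G₂.bottom.Nonempty) :
    (G₁.prod G₂).mu h = G₁.mu h * G₂.mu h := by
  classical
  have hb₃ : (G₁.prod G₂).bottom.Nonempty := by
    rw [HypercubeGraph.bottom_prod]
    exact hb₁.product hb₂
  obtain ⟨Z₁, hZ₁ne, hZ₁sub, hmu₁⟩ := G₁.exists_mu_eq h hb₁
  obtain ⟨Z₂, hZ₂ne, hZ₂sub, hmu₂⟩ := G₂.exists_mu_eq h hb₂
  have hz1pos : (0:ℝ) < Z₁.card := by exact_mod_cast hZ₁ne.card_pos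
  have hz2pos : (0:ℝ) < Z₂.card := by exact_mod_cast hZ₂ne.card_pos
  have hprodsub : Z₁ ×ˢ Z₂ ⊆ (G₁.prod G₂).bottom := by
    rw [HypercubeGraph.bottom_prod]
    exact Finset.product_subset_product hZ₁sub hZ₂sub
  have hcard : (((G₁.prod G₂).ImL (Z₁ ×ˢ Z₂) h).card : ℝ)
      ≤ ((G₁.ImL Z₁ h).card : ℝ) * ((G₂.ImL Z₂ h).card : ℝ) := by
    have := Finset.card_le_card
      (HypercubeGraph.ImL_top_prod_subset (G₁ := G₁) (G₂ := G₂) (Z₁ := Z₁) (Z₂ := Z₂))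
    rw [Finset.card_product] at this
    exact_mod_cast this
  have hle : (G₁.prod G₂).mu h ≤ G₁.mu h * G₂.mu h := by
    calc (G₁.prod G₂).mu h
        ≤ (((G₁.prod G₂).ImL (Z₁ ×ˢ Z₂) h).card : ℝ) / (((Z₁ ×ˢ Z₂).card : ℕ) : ℝ) :=
          HypercubeGraph.mu_le (hZ₁ne.product hZ₂ne) hprodsub
      _ = (((G₁.prod G₂).ImL (Z₁ ×ˢ Z₂) h).card : ℝ) / ((Z₁.card : ℝ) * (Z₂.card : ℝ)) := by
          rw [Finset.card_product]; push_cast; ring_nf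
      _ ≤ (((G₁.ImL Z₁ h).card : ℝ) * ((G₂.ImL Z₂ h).card : ℝ))
            / ((Z₁.card : ℝ) * (Z₂.card : ℝ)) := by
          apply div_le_div_of_nonneg_right hcard
          positivity
      _ = G₁.mu h * G₂.mu h := by
          rw [hmu₁, hmu₂, div_mul_div_comm]
  obtain ⟨Z, hZne, hZsub, hmu₃⟩ := (G₁.prod G₂).exists_mu_eq h hb₃
  have hZbot : ∀ z ∈ Z, z.1 ∈ G₁.bottom ∧ z.2 ∈ G₂.bottom := by
    intro z hz
    have := hZsub hz
    rw [HypercubeGraph.bottom_prod, Finset.mem_product] at this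
    exact this
  have hA : ∀ X : Finset V₁, X.Nonempty → X ⊆ Z.image Prod.fst →
      G₁.mu h * X.card ≤ ((X.biUnion fun a => G₁.ImL {a} h).card : ℝ) := by
    intro X hXne hXsub
    have hXb : X ⊆ G₁.bottom := by
      intro x hx
      obtain ⟨z, hz, rfl⟩ := Finset.mem_image.1 (hXsub hx)
      exact (hZbot z hz).1
    have hm := HypercubeGraph.mu_le (i := h) hXne hXb
    have hXpos : (0:ℝ) < X.card := by exact_mod_cast hXne.card_pos
    rw [← HypercubeGraph.ImL_eq_biUnion]
    exact (le_div_iff₀ hXpos).1 hm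
  have hB : ∀ Y : Finset V₂, Y.Nonempty → Y ⊆ Z.image Prod.snd →
      G₂.mu h * Y.card ≤ ((Y.biUnion fun b => G₂.ImL {b} h).card : ℝ) := by
    intro Y hYne hYsub
    have hYb : Y ⊆ G₂.bottom := by
      intro y hy
      obtain ⟨z, hz, rfl⟩ := Finset.mem_image.1 (hYsub hy)
      exact (hZbot z hz).2
    have hm := HypercubeGraph.mu_le (i := h) hYne hYb
    have hYpos : (0:ℝ) < Y.card := by exact_mod_cast hYne.card_pos
    rw [← HypercubeGraph.ImL_eq_biUnion]
    exact (le_div_iff₀ hYpos).1 hm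
  have key := HypercubeGraph.counting (fun a => G₁.ImL {a} h) (fun b => G₂.ImL {b} h) Z
    (G₁.mu h) (G₂.mu h) (G₂.mu_nonneg h hb₂) hA hB
  have hT : (G₁.prod G₂).ImL Z h
      = Z.biUnion fun z => (G₁.ImL {z.1} h) ×ˢ (G₂.ImL {z.2} h) :=
    HypercubeGraph.ImL_top_prod h₁ hZsub
  have hZpos : (0:ℝ) < Z.card := by exact_mod_cast hZne.card_pos
  have hge : G₁.mu h * G₂.mu h ≤ (G₁.prod G₂).mu h := by
    rw [hmu₃, le_div_iff₀ hZpos, hT]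
    exact key
  exact le_antisymm hle hge
end

section
/- In a square commutative Q_h-hypercube graph, for any path u_0 → u_1 → ... → u_h from the bottom layer to the top layer, and any permutation of the order in which the indices are added, there exists a path from u_0 to u_h visiting the index sets in that permuted order; in particular there is a path u_0 → u'_1 → ... → u'_{h-1} → u_h with u'_j ∈ U_{{1,...,j}}. -/
open Pointwise Finset

section PathRerouteAux

variable {V : Type*} {h : ℕ}

lemma hcg_image_swap {α : Type*} [DecidableEq α] (a b : α) (S : Finset α)
    (ha : a ∈ S) (hb : b ∈ S) : S.image (Equiv.swap a b) = S := by
  refine Finset.eq_of_subset_of_card_le ?_ ?_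
  · intro x hx
    simp only [Finset.mem_image] at hx
    obtain ⟨y, hy, rfl⟩ := hx
    rcases eq_or_ne y a with rfl | hya
    · rwa [Equiv.swap_apply_left]
    rcases eq_or_ne y b with rfl | hyb
    · rwa [Equiv.swap_apply_right]
    · rwa [Equiv.swap_apply_of_ne_of_ne hya hyb]
  · rw [Finset.card_image_of_injective _ (Equiv.injective _)]

lemma hcg_filter_succ (k : ℕ) (hk : k < h) :
    (Finset.univ.filter fun l : Fin h => (l : ℕ) < k + 1)
      = insert (⟨k, hk⟩ : Fin h) (Finset.univ.filter fun l : Fin h => (l : ℕ) < k) := by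
  ext l
  simp only [Finset.mem_filter, Finset.mem_univ, true_and, Finset.mem_insert, Fin.ext_iff]
  omega

/-- A path realizing the permutation `π` between the endpoints of `u`. -/
def GoodPath (G : HypercubeGraph h V) (u : Fin (h + 1) → V) (π : Equiv.Perm (Fin h)) : Prop :=
  ∃ q : Fin (h + 1) → V, q 0 = u 0 ∧ q (Fin.last h) = u (Fin.last h) ∧
    (∀ k : Fin h, G.Edge (q k.castSucc) (q k.succ)) ∧
    ∀ k : Fin (h + 1), G.idx (q k) =
      (Finset.univ.filter fun l : Fin h => (l : ℕ) < (k : ℕ)).image π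

lemma good_base (G : HypercubeGraph h V) (u : Fin (h + 1) → V)
    (hedge : ∀ k : Fin h, G.Edge (u k.castSucc) (u k.succ))
    (h0 : G.idx (u 0) = ∅) : ∃ τ : Equiv.Perm (Fin h), GoodPath G u τ := by
  classical
  choose f hf1 hf2 using fun k => G.edge_step _ _ (hedge k)
  have hidx0 : ∀ (m : ℕ) (hm : m < h + 1),
      G.idx (u ⟨m, hm⟩) = (Finset.univ.filter fun l : Fin h => (l : ℕ) < m).image f := by
    intro m
    induction m with
    | zero =>
      intro hm
      have : (⟨0, hm⟩ : Fin (h + 1)) = 0 := rfl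
      rw [this, h0]
      have : (Finset.univ.filter fun l : Fin h => (l : ℕ) < 0) = ∅ := by
        ext l; simp
      rw [this, Finset.image_empty]
    | succ m ih =>
      intro hm
      have hmh : m < h := by omega
      have h1 : (⟨m + 1, hm⟩ : Fin (h + 1)) = (⟨m, hmh⟩ : Fin h).succ := rfl
      have h2 : (⟨m, by omega⟩ : Fin (h + 1)) = (⟨m, hmh⟩ : Fin h).castSucc := rfl
      rw [h1, hf2 ⟨m, hmh⟩, ← h2, ih (by omega), hcg_filter_succ m hmh, Finset.image_insert]
  have hidx : ∀ k : Fin (h + 1),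
      G.idx (u k) = (Finset.univ.filter fun l : Fin h => (l : ℕ) < (k : ℕ)).image f := by
    intro k
    have := hidx0 k.val k.isLt
    simpa using this
  have hf_lt : ∀ a b : Fin h, (a : ℕ) < (b : ℕ) → f a ≠ f b := by
    intro a b hab heq
    apply hf1 b
    have ha : f a ∈ G.idx (u b.castSucc) := by
      rw [hidx b.castSucc]
      refine Finset.mem_image_of_mem f ?_
      simp only [Finset.mem_filter, Finset.mem_univ, true_and, Fin.coe_castSucc]
      exact hab
    rwa [heq] at ha
  have hfinj : Function.Injective f := by
    intro a b heq
    by_contra hne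
    rcases Nat.lt_trichotomy a.val b.val with hlt | heqv | hgt
    · exact hf_lt a b hlt heq
    · exact hne (Fin.ext heqv)
    · exact hf_lt b a hgt heq.symm
  refine ⟨Equiv.ofBijective f ((Finite.injective_iff_bijective).mp hfinj), u, rfl, rfl, hedge, ?_⟩
  intro k
  exact hidx k

lemma good_swap (G : HypercubeGraph h V) (hG : G.SquareComm) (u : Fin (h + 1) → V)
    (π : Equiv.Perm (Fin h)) (hπ : GoodPath G u π) (a b : Fin h) (hab : (a : ℕ) + 1 = (b : ℕ)) :
    GoodPath G u (π * Equiv.swap a b) := by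
  classical
  obtain ⟨q, hq0, hqL, hqE, hqI⟩ := hπ
  obtain ⟨j, hjh, haj, hbj⟩ : ∃ j, j + 1 < h ∧ (a : ℕ) = j ∧ (b : ℕ) = j + 1 :=
    ⟨a.val, by omega, rfl, by omega⟩
  -- convenient forms
  have keyE : ∀ (m : ℕ) (hm : m < h),
      G.Edge (q ⟨m, by omega⟩) (q ⟨m + 1, by omega⟩) := fun m hm => hqE ⟨m, hm⟩
  have keyI : ∀ (m : ℕ) (hm : m < h + 1),
      G.idx (q ⟨m, hm⟩) = (Finset.univ.filter fun l : Fin h => (l : ℕ) < m).image π :=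
    fun m hm => hqI ⟨m, hm⟩
  set J : ℕ → Finset (Fin h) := fun m => Finset.univ.filter fun l : Fin h => (l : ℕ) < m with hJ
  have e01 : G.Edge (q ⟨j, by omega⟩) (q ⟨j + 1, by omega⟩) := keyE j (by omega)
  have e12 : G.Edge (q ⟨j + 1, by omega⟩) (q ⟨j + 2, by omega⟩) := keyE (j + 1) (by omega)
  set v0 : V := q ⟨j, by omega⟩ with hv0
  set v1 : V := q ⟨j + 1, by omega⟩ with hv1
  set v2 : V := q ⟨j + 2, by omega⟩ with hv2
  have s1 : HypercubeGraph.Step (G.idx v0) (G.idx v1) := G.edge_step _ _ e01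
  have s2 : HypercubeGraph.Step (G.idx v1) (G.idx v2) := G.edge_step _ _ e12
  obtain ⟨F, -, hF⟩ := hG.2 (G.idx v0) (G.idx v1) (G.idx v2) s1 s2 v1 v2 rfl rfl e12
    ({v0} : Finset V) (by
      intro w hw
      rw [Finset.mem_singleton] at hw
      subst hw
      exact ⟨rfl, e01⟩)
  obtain ⟨hw1, hw2, hw3⟩ := hF v0 (Finset.mem_singleton_self v0)
  set w : V := F v0 with hwdef
  -- b as a mk
  have hbmk : b = (⟨j + 1, hjh⟩ : Fin h) := Fin.ext hbj
  have hamk : a = (⟨j, by omega⟩ : Fin h) := Fin.ext haj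
  -- the sdiff is {π b}
  have hbnot : (π : Fin h → Fin h) b ∉ (J (j + 1)).image π := by
    simp only [Finset.mem_image]
    rintro ⟨x, hx, hxe⟩
    have : x = b := π.injective hxe
    subst this
    simp only [hJ, Finset.mem_filter, Finset.mem_univ, true_and] at hx
    omega
  have hJ2 : J (j + 2) = insert b (J (j + 1)) := by
    rw [hbmk]; exact hcg_filter_succ (j + 1) hjh
  have hsd : G.idx v2 \ G.idx v1 = {π b} := by
    rw [keyI (j + 1) (by omega), keyI (j + 2) (by omega)]
    show (J (j+2)).image π \ (J (j+1)).image π = {π b}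
    rw [hJ2, Finset.image_insert]
    ext y
    simp only [Finset.mem_sdiff, Finset.mem_insert, Finset.mem_singleton]
    constructor
    · rintro ⟨hy1 | hy1, hy2⟩
      · exact hy1
      · exact absurd hy1 hy2
    · rintro rfl
      exact ⟨Or.inl rfl, hbnot⟩
  have hwidx : G.idx w = insert (π b) ((J j).image π) := by
    rw [hw1, hsd, keyI j (by omega)]
    show (J j).image π ∪ {π b} = _
    rw [Finset.union_comm, ← Finset.insert_eq]
  -- image of J under the swap
  have swap_fix : ∀ m : ℕ, m ≤ j → (J m).image (Equiv.swap a b) = J m := by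
    intro m hm
    have : ∀ x ∈ J m, Equiv.swap a b x = id x := by
      intro x hx
      simp only [hJ, Finset.mem_filter] at hx
      refine Equiv.swap_apply_of_ne_of_ne ?_ ?_ <;> [skip; skip] <;>
        · intro hxe; subst hxe; omega
    rw [Finset.image_congr this, Finset.image_id]
  have swap_big : ∀ m : ℕ, j + 2 ≤ m → (J m).image (Equiv.swap a b) = J m := by
    intro m hm
    refine hcg_image_swap a b _ ?_ ?_ <;> simp only [hJ, Finset.mem_filter, Finset.mem_univ,
      true_and] <;> omega
  have swap_mid : (J (j + 1)).image (Equiv.swap a b) = insert b (J j) := by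
    have hJ1 : J (j + 1) = insert a (J j) := by
      rw [hamk]; exact hcg_filter_succ j (by omega)
    rw [hJ1, Finset.image_insert, Equiv.swap_apply_left, swap_fix j le_rfl]
  have comp : ∀ S : Finset (Fin h),
      S.image ⇑(π * Equiv.swap a b) = (S.image (Equiv.swap a b)).image π := by
    intro S
    rw [Finset.image_image]
    rfl
  -- the new path
  refine ⟨fun k => if (k : ℕ) = j + 1 then w else q k, ?_, ?_, ?_, ?_⟩
  · dsimp only
    rw [if_neg (by simp only [Fin.val_zero]; omega)]; exact hq0
  · dsimp only
    rw [if_neg (by simp only [Fin.val_last]; omega)]; exact hqL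
  · intro k
    dsimp only
    by_cases hk1 : (k : ℕ) = j
    · have hc : (k.castSucc : ℕ) ≠ j + 1 := by simp only [Fin.coe_castSucc]; omega
      have hs : (k.succ : ℕ) = j + 1 := by simp only [Fin.val_succ]; omega
      rw [if_neg hc, if_pos hs]
      have : k.castSucc = (⟨j, by omega⟩ : Fin (h + 1)) :=
        Fin.ext (by simp only [Fin.coe_castSucc]; omega)
      rw [this]
      exact hw2
    by_cases hk2 : (k : ℕ) = j + 1
    · have hc : (k.castSucc : ℕ) = j + 1 := by simp only [Fin.coe_castSucc]; omega
      have hs : (k.succ : ℕ) ≠ j + 1 := by simp only [Fin.val_succ]; omega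
      rw [if_pos hc, if_neg hs]
      have : k.succ = (⟨j + 2, by omega⟩ : Fin (h + 1)) :=
        Fin.ext (by simp only [Fin.val_succ]; omega)
      rw [this]
      exact hw3
    · have hc : (k.castSucc : ℕ) ≠ j + 1 := by simp only [Fin.coe_castSucc]; omega
      have hs : (k.succ : ℕ) ≠ j + 1 := by simp only [Fin.val_succ]; omega
      rw [if_neg hc, if_neg hs]
      exact hqE k
  · intro k
    dsimp only
    by_cases hk : (k : ℕ) = j + 1
    · rw [if_pos hk, hwidx]
      show _ = (J (k : ℕ)).image _
      rw [hk, comp, swap_mid, Finset.image_insert]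
    · rw [if_neg hk]
      show G.idx (q k) = (J (k : ℕ)).image _
      rw [comp]
      rcases Nat.lt_or_ge (k : ℕ) (j + 1) with hlt | hge
      · rw [swap_fix (k : ℕ) (by omega)]
        exact keyI (k : ℕ) k.isLt
      · rw [swap_big (k : ℕ) (by omega)]
        exact keyI (k : ℕ) k.isLt

end PathRerouteAux


/-- In a square commutative hypercube graph, a full path from the bottom layer to the
top layer can be rerouted so that the indices are added in any prescribed order. -/
theorem path_reroute {V : Type*} (h : ℕ) (G : HypercubeGraph h V) (hG : G.SquareComm)
    (u : Fin (h + 1) → V)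
    (hedge : ∀ k : Fin h, G.Edge (u k.castSucc) (u k.succ))
    (h0 : G.idx (u 0) = ∅) (σ : Equiv.Perm (Fin h)) :
    ∃ q : Fin (h + 1) → V, q 0 = u 0 ∧ q (Fin.last h) = u (Fin.last h) ∧
      (∀ k : Fin h, G.Edge (q k.castSucc) (q k.succ)) ∧
      ∀ k : Fin (h + 1), G.idx (q k) =
        (Finset.univ.filter fun l : Fin h => (l : ℕ) < (k : ℕ)).image σ := by
  obtain ⟨τ, hτ⟩ := good_base G u hedge h0
  suffices hGP : GoodPath G u σ from hGP
  obtain _ | n := h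
  · have : σ = τ := Equiv.ext fun x => x.elim0
    rwa [this]
  · have hmem : τ⁻¹ * σ ∈ Submonoid.closure
        (Set.range fun i : Fin n => Equiv.swap i.castSucc i.succ) := by
      rw [Equiv.Perm.mclosure_swap_castSucc_succ]; trivial
    obtain ⟨l, hl, hlp⟩ := Submonoid.exists_list_of_mem_closure hmem
    have main : ∀ L : List (Equiv.Perm (Fin (n + 1))),
        (∀ g ∈ L, g ∈ Set.range fun i : Fin n => Equiv.swap i.castSucc i.succ) →
        GoodPath G u (τ * L.prod) := by
      intro L
      induction L using List.reverseRecOn with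
      | nil => intro _; simpa using hτ
      | append_singleton L g ih =>
        intro hL
        rw [List.prod_append, List.prod_singleton, ← mul_assoc]
        obtain ⟨i, rfl⟩ := hL g (by simp)
        exact good_swap G hG u _ (ih fun x hx => hL x (by simp [hx])) i.castSucc i.succ (by simp)
    have := main l hl
    rwa [hlp, mul_inv_cancel_left] at this
end

section
/- Plünnecke's inequality μ_h(G) ≤ μ_1(G)^h for commutative layered graphs follows from the bound μ_h(H) ≤ (μ_1(H)/h)^h for square commutative hypercube graphs, via the construction H with U_I = V_{|I|} and edges inherited from G; this H is square commutative with μ_h(H) = μ_h(G) and μ_1(H) = h·μ_1(G). -/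
open Pointwise Finset

/-- A Plünnecke-commutative layered graph with layers `V_0, …, V_h`. -/
structure LayeredGraph (h : ℕ) (V : Type*) where
  verts : Finset V
  layer : V → ℕ
  layer_le : ∀ v ∈ verts, layer v ≤ h
  Edge : V → V → Prop
  edge_mem_left : ∀ u v, Edge u v → u ∈ verts
  edge_mem_right : ∀ u v, Edge u v → v ∈ verts
  edge_step : ∀ u v, Edge u v → layer v = layer u + 1

namespace LayeredGraph

variable {h : ℕ} {V : Type*}

/-- Plünnecke commutativity for layered graphs. -/
def PlunneckeComm (G : LayeredGraph h V) : Prop :=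
  (∀ v v', G.Edge v v' → ∀ S : Finset V, (∀ w ∈ S, G.Edge v' w) →
    ∃ f : V → V, Set.InjOn f ↑S ∧ ∀ w ∈ S, G.Edge v (f w) ∧ G.Edge (f w) w) ∧
  (∀ v' v'', G.Edge v' v'' → ∀ S : Finset V, (∀ w ∈ S, G.Edge w v') →
    ∃ f : V → V, Set.InjOn f ↑S ∧ ∀ w ∈ S, G.Edge w (f w) ∧ G.Edge (f w) v'')

open Classical in
/-- The image of `Z` in layer `i`: vertices of layer `i` reachable from `Z`. -/
noncomputable def Im (G : LayeredGraph h V) (Z : Finset V) (i : ℕ) : Finset V :=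
  G.verts.filter fun v => G.layer v = i ∧ ∃ z ∈ Z, Relation.ReflTransGen G.Edge z v

open Classical in
/-- The bottom layer of a layered graph. -/
noncomputable def bottom (G : LayeredGraph h V) : Finset V :=
  G.verts.filter fun v => G.layer v = 0

/-- The `i`-th magnification ratio of a layered graph. -/
noncomputable def mu (G : LayeredGraph h V) (i : ℕ) : ℝ :=
  sInf { r : ℝ | ∃ Z : Finset V, Z.Nonempty ∧ Z ⊆ G.bottom ∧
    r = ((G.Im Z i).card : ℝ) / (Z.card : ℝ) }

/-- The `Q_h`-hypercube graph `H` with `U_I` a copy of `V_{|I|}` and edges inherited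
from the layered graph `G`. -/
def toHypercube [DecidableEq V] (G : LayeredGraph h V) : HypercubeGraph h (Finset (Fin h) × V) where
  verts := (Finset.univ : Finset (Finset (Fin h))).biUnion fun I =>
    (G.verts.filter fun v => G.layer v = I.card).image fun v => (I, v)
  idx p := p.1
  Edge p q := G.layer p.2 = p.1.card ∧ (∃ i ∉ p.1, q.1 = insert i p.1) ∧ G.Edge p.2 q.2
  edge_mem_left := by
    rintro ⟨I, x⟩ ⟨J, y⟩ ⟨hl, ⟨i, hi, rfl⟩, he⟩
    simp only [Finset.mem_biUnion, Finset.mem_univ, Finset.mem_image,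
      Finset.mem_filter, true_and]
    exact ⟨I, x, ⟨G.edge_mem_left _ _ he, hl⟩, rfl⟩
  edge_mem_right := by
    rintro ⟨I, x⟩ ⟨J, y⟩ ⟨hl, ⟨i, hi, rfl⟩, he⟩
    simp only [Finset.mem_biUnion, Finset.mem_univ, Finset.mem_image,
      Finset.mem_filter, true_and]
    refine ⟨insert i I, y, ⟨G.edge_mem_right _ _ he, ?_⟩, rfl⟩
    rw [G.edge_step _ _ he, hl, Finset.card_insert_of_notMem hi]
  edge_step := by
    rintro ⟨I, x⟩ ⟨J, y⟩ ⟨hl, ⟨i, hi, rfl⟩, he⟩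
    exact ⟨i, hi, rfl⟩

end LayeredGraph

/-!
A path of `G` from `z ∈ V₀` to `w ∈ V_i` lifts to a path of `H` from `(∅, z)` to `(I, w)` for
every `I` with `|I| = i`, by adding the indices of `I` one at a time, and paths of `H` project to
paths of `G`. Hence the image in layer `i` of `H` of a set `Z ⊆ U_∅` consists of `h.choose i`
copies of the image of `Z` in `G`, so `μ_i(H) = (h.choose i) μ_i(G)`. A square
`I → I ∪ {i} → I ∪ {i, j}` of `H` is completed through `I ∪ {j}` by copying there the
injective completion that Plünnecke commutativity of `G` provides.
-/

theorem Finset.union_sdiff_insert_insert {α : Type*} [DecidableEq α] {I : Finset α} {i j : α}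
    (hj : j ∉ insert i I) : I ∪ (insert j (insert i I) \ insert i I) = insert j I := by
  rw [insert_sdiff_cancel hj, union_comm, ← insert_eq]

theorem Finset.notMem_insert_swap {α : Type*} [DecidableEq α] {I : Finset α} {i j : α}
    (hi : i ∉ I) (hj : j ∉ insert i I) : j ∉ I ∧ i ∉ insert j I := by
  simp only [mem_insert, not_or] at hj ⊢
  exact ⟨hj.2, Ne.symm hj.1, hi⟩

theorem Prod.injOn_mk_comp_snd {α β γ : Type*} [DecidableEq β] {S : Finset (α × β)} {a : α}
    (hS : ∀ w ∈ S, w.1 = a) {f : β → γ} (hf : Set.InjOn f (S.image Prod.snd)) (b : α) :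
    Set.InjOn (fun w : α × β => (b, f w.2)) S := fun w hw w' hw' hww' =>
  Prod.ext ((hS w hw).trans (hS w' hw').symm)
    (hf (mem_image_of_mem _ hw) (mem_image_of_mem _ hw') (congrArg Prod.snd hww'))

namespace LayeredGraph

variable {h : ℕ} {V : Type*}

theorem layer_le_of_reflTransGen (G : LayeredGraph h V) {a b : V}
    (hab : Relation.ReflTransGen G.Edge a b) : G.layer a ≤ G.layer b := by
  induction hab with
  | refl => exact le_rfl
  | tail _ e ih => have := G.edge_step _ _ e; omega

theorem layer_eq_card_insert (G : LayeredGraph h V) {I : Finset (Fin h)} {i : Fin h} {v w : V}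
    (hv : G.layer v = I.card) (hi : i ∉ I) (hvw : G.Edge v w) :
    G.layer w = (insert i I).card := by
  rw [G.edge_step _ _ hvw, hv, card_insert_of_notMem hi]

variable [DecidableEq V] (G : LayeredGraph h V)

theorem mem_toHypercube_verts (p : Finset (Fin h) × V) :
    p ∈ G.toHypercube.verts ↔ p.2 ∈ G.verts ∧ G.layer p.2 = p.1.card := by
  obtain ⟨I, v⟩ := p
  simp [toHypercube, and_comm]

theorem mem_toHypercube_bottom (p : Finset (Fin h) × V) :
    p ∈ G.toHypercube.bottom ↔ p.1 = ∅ ∧ p.2 ∈ G.bottom := by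
  simp only [HypercubeGraph.bottom, bottom, mem_filter, mem_toHypercube_verts]
  constructor
  · rintro ⟨⟨hv, hl⟩, he⟩
    exact ⟨he, hv, by rw [hl, show p.1 = ∅ from he, card_empty]⟩
  · rintro ⟨he, hv, hl⟩
    exact ⟨⟨hv, by rw [hl, he, card_empty]⟩, he⟩

theorem toHypercube_edge {I : Finset (Fin h)} {i : Fin h} {v w : V}
    (hv : G.layer v = I.card) (hi : i ∉ I) (hvw : G.Edge v w) :
    G.toHypercube.Edge (I, v) (insert i I, w) :=
  ⟨hv, ⟨i, hi, rfl⟩, hvw⟩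

theorem reflTransGen_snd_of_toHypercube {p q : Finset (Fin h) × V}
    (hpq : Relation.ReflTransGen G.toHypercube.Edge p q) :
    Relation.ReflTransGen G.Edge p.2 q.2 := by
  induction hpq with
  | refl => exact .refl
  | tail _ e ih => exact ih.tail e.2.2

theorem toHypercube_reflTransGen {z w : V} (hzw : Relation.ReflTransGen G.Edge z w)
    {I₀ I : Finset (Fin h)} (hsub : I₀ ⊆ I) (hz : G.layer z = I₀.card)
    (hw : G.layer w = I.card) :
    Relation.ReflTransGen G.toHypercube.Edge (I₀, z) (I, w) := by
  induction hzw using Relation.ReflTransGen.head_induction_on generalizing I₀ with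
  | refl =>
    obtain rfl := eq_of_subset_of_card_le hsub (by omega)
    exact .refl
  | head e tl ih =>
    have hlt : I₀.card < I.card := by
      have := G.layer_le_of_reflTransGen tl
      have := G.edge_step _ _ e
      omega
    obtain ⟨i, hiI, hiI₀⟩ := not_subset.mp fun hI => (card_le_card hI).not_gt hlt
    exact .head (G.toHypercube_edge hz hiI₀ e)
      (ih (insert_subset hiI hsub) (G.layer_eq_card_insert hz hiI₀ e))

theorem exists_eq_map_of_subset_toHypercube_bottom {Z : Finset (Finset (Fin h) × V)}
    (hZ : Z ⊆ G.toHypercube.bottom) :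
    ∃ Z' ⊆ G.bottom, Z = Z'.map (.sectR ∅ V) := by
  have hZ' := fun p (hp : p ∈ Z) => (G.mem_toHypercube_bottom p).mp (hZ hp)
  refine ⟨Z.image Prod.snd, fun v hv => ?_, ?_⟩
  · obtain ⟨p, hp, rfl⟩ := mem_image.mp hv
    exact (hZ' p hp).2
  · ext p
    simp only [mem_map, mem_image, Function.Embedding.sectR_apply]
    constructor
    · intro hp
      exact ⟨p.2, ⟨p, hp, rfl⟩, by rw [← (hZ' p hp).1]⟩
    · rintro ⟨_, ⟨q, hq, rfl⟩, rfl⟩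
      rwa [← (hZ' q hq).1]

theorem ImL_toHypercube_map {Z : Finset V} (hZ : Z ⊆ G.bottom) (i : ℕ) :
    G.toHypercube.ImL (Z.map (.sectR ∅ V)) i = powersetCard i univ ×ˢ G.Im Z i := by
  ext ⟨I, w⟩
  simp only [HypercubeGraph.ImL, Im, mem_filter, mem_product, mem_powersetCard, mem_map,
    mem_toHypercube_verts, Function.Embedding.sectR_apply, subset_univ, true_and]
  constructor
  · rintro ⟨⟨hw, hl⟩, rfl, _, ⟨z, hz, rfl⟩, hreach⟩
    exact ⟨rfl, hw, hl, z, hz, G.reflTransGen_snd_of_toHypercube hreach⟩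
  · rintro ⟨rfl, hw, hl, z, hz, hreach⟩
    have hz0 : G.layer z = (∅ : Finset (Fin h)).card := (mem_filter.mp (hZ hz)).2
    exact ⟨⟨hw, hl⟩, rfl, _, ⟨z, hz, rfl⟩,
      G.toHypercube_reflTransGen hreach (empty_subset I) hz0 hl⟩

theorem mu_toHypercube (i : ℕ) : G.toHypercube.mu i = h.choose i * G.mu i := by
  have hratios : { r : ℝ | ∃ Z : Finset (Finset (Fin h) × V), Z.Nonempty ∧
        Z ⊆ G.toHypercube.bottom ∧ r = ((G.toHypercube.ImL Z i).card : ℝ) / Z.card } =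
      (h.choose i : ℝ) • { r : ℝ | ∃ Z : Finset V, Z.Nonempty ∧ Z ⊆ G.bottom ∧
        r = ((G.Im Z i).card : ℝ) / Z.card } := by
    have hratio {Z : Finset V} (hZ : Z ⊆ G.bottom) :
        ((G.toHypercube.ImL (Z.map (.sectR ∅ V)) i).card : ℝ) /
          (Z.map (.sectR (∅ : Finset (Fin h)) V)).card =
          (h.choose i : ℝ) • (((G.Im Z i).card : ℝ) / Z.card) := by
      rw [G.ImL_toHypercube_map hZ, card_product, card_powersetCard, card_univ,
        Fintype.card_fin, card_map, smul_eq_mul, Nat.cast_mul, mul_div_assoc]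
    ext r
    simp only [Set.mem_smul_set, Set.mem_ofPred_eq]
    constructor
    · rintro ⟨Z, hne, hZ, rfl⟩
      obtain ⟨Z', hZ', rfl⟩ := G.exists_eq_map_of_subset_toHypercube_bottom hZ
      exact ⟨_, ⟨Z', map_nonempty.mp hne, hZ', rfl⟩, (hratio hZ').symm⟩
    · rintro ⟨_, ⟨Z, hne, hZ, rfl⟩, rfl⟩
      refine ⟨Z.map (.sectR ∅ V), hne.map, fun p hp => ?_, (hratio hZ).symm⟩
      obtain ⟨z, hz, rfl⟩ := mem_map.mp hp
      exact (G.mem_toHypercube_bottom _).mpr ⟨rfl, hZ hz⟩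
  rw [HypercubeGraph.mu, mu, hratios, Real.sInf_smul_of_nonneg (by positivity), smul_eq_mul]

theorem toHypercube_squareComm (hG : G.PlunneckeComm) : G.toHypercube.SquareComm := by
  constructor
  · rintro _ _ _ ⟨i, hi, rfl⟩ ⟨j, hj, rfl⟩ ⟨I, v⟩ ⟨_, v'⟩ rfl rfl ⟨hv, -, hvv'⟩ S hS
    obtain ⟨f, hf, hff⟩ := hG.1 v v' hvv' (S.image Prod.snd) (by
      simp only [forall_mem_image]
      exact fun w hw => (hS w hw).2.2.2)
    obtain ⟨hjI, hij⟩ := notMem_insert_swap hi hj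
    refine ⟨fun w => (insert j I, f w.2), Prod.injOn_mk_comp_snd (fun w hw => (hS w hw).1) hf _,
      fun w hw => ?_⟩
    obtain ⟨hvf, hfw⟩ := hff w.2 (mem_image_of_mem _ hw)
    have hw : w = (insert i (insert j I), w.2) :=
      Prod.ext ((hS w hw).1.trans (insert_comm j i I)) rfl
    refine ⟨(union_sdiff_insert_insert hj).symm, G.toHypercube_edge hv hjI hvf, ?_⟩
    rw [hw]
    exact G.toHypercube_edge (G.layer_eq_card_insert hv hjI hvf) hij hfw
  · rintro I _ _ ⟨i, hi, rfl⟩ ⟨j, hj, rfl⟩ ⟨_, v'⟩ ⟨_, v''⟩ rfl rfl ⟨-, -, hv'v''⟩ S hS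
    obtain ⟨f, hf, hff⟩ := hG.2 v' v'' hv'v'' (S.image Prod.snd) (by
      simp only [forall_mem_image]
      exact fun w hw => (hS w hw).2.2.2)
    obtain ⟨hjI, hij⟩ := notMem_insert_swap hi hj
    refine ⟨fun w => (insert j I, f w.2), Prod.injOn_mk_comp_snd (fun w hw => (hS w hw).1) hf _,
      fun w hw => ?_⟩
    obtain ⟨hwf, hfv''⟩ := hff w.2 (mem_image_of_mem _ hw)
    obtain ⟨hwI, hwl, -⟩ := hS w hw
    replace hwI : w.1 = I := hwI
    rw [hwI] at hwl
    have hw : w = (I, w.2) := Prod.ext hwI rfl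
    refine ⟨(union_sdiff_insert_insert hj).symm, hw ▸ G.toHypercube_edge hwl hjI hwf, ?_⟩
    rw [insert_comm j i I]
    exact G.toHypercube_edge (G.layer_eq_card_insert hwl hjI hwf) hij hfv''

end LayeredGraph

theorem plunnecke_from_hypercube_general {V : Type} [DecidableEq V] (h : ℕ)
    (G : LayeredGraph h V) (hG : G.PlunneckeComm) (hb : G.bottom.Nonempty)
    (hsq : ∀ (W : Type) (H : HypercubeGraph h (Finset (Fin h) × W)),
      H.SquareComm → H.bottom.Nonempty → H.mu h ≤ (H.mu 1 / h) ^ h) :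
    G.toHypercube.SquareComm ∧
    G.toHypercube.mu h = G.mu h ∧
    G.toHypercube.mu 1 = h * G.mu 1 ∧
    G.mu h ≤ (G.mu 1) ^ h := by
  have hsc := G.toHypercube_squareComm hG
  have hmuh : G.toHypercube.mu h = G.mu h := by simpa using G.mu_toHypercube h
  have hmu1 : G.toHypercube.mu 1 = h * G.mu 1 := by simpa using G.mu_toHypercube 1
  refine ⟨hsc, hmuh, hmu1, ?_⟩
  have hbH : G.toHypercube.bottom.Nonempty := by
    obtain ⟨z, hz⟩ := hb
    exact ⟨(∅, z), (G.mem_toHypercube_bottom _).mpr ⟨rfl, hz⟩⟩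
  have hcancel : ((h : ℝ) * G.mu 1 / h) ^ h = G.mu 1 ^ h := by
    rcases Nat.eq_zero_or_pos h with h0 | hpos
    · simp [h0]
    · rw [mul_div_cancel_left₀ _ (by positivity)]
  simpa only [hmuh, hmu1, hcancel] using hsq V G.toHypercube hsc hbH

/-- Plünnecke's inequality `μ_h(G) ≤ μ_1(G)^h` for commutative layered graphs follows
from the bound for square commutative hypercube graphs via the construction
`H = G.toHypercube`, which is square commutative and satisfies `μ_h(H) = μ_h(G)` and
`μ_1(H) = h·μ_1(G)`. -/
theorem plunnecke_from_hypercube {V : Type} [DecidableEq V] (h : ℕ) (hh : 0 < h)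
    (G : LayeredGraph h V) (hG : G.PlunneckeComm) (hb : G.bottom.Nonempty)
    (hsq : ∀ (W : Type) (H : HypercubeGraph h (Finset (Fin h) × W)),
      H.SquareComm → H.bottom.Nonempty → H.mu h ≤ (H.mu 1 / h) ^ h) :
    G.toHypercube.SquareComm ∧
    G.toHypercube.mu h = G.mu h ∧
    G.toHypercube.mu 1 = h * G.mu 1 ∧
    G.mu h ≤ (G.mu 1) ^ h :=
  plunnecke_from_hypercube_general h G hG hb hsq
end
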